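/- arXiv:1806.06319 — 8 statements merged into one kernel-verified Lean document; each statement's English description precedes it below -/
import Mathlib

section
/- Let k ≥ 1 be an integer. For every real number u ≥ 0 one has e^u − e^{(1−k)u} ≥ k·u − (k(k−2)/2)·u². -/
/-- For an integer `k ≥ 1` and every real `u ≥ 0`,
`e^u − e^{(1−k)u} ≥ k·u − (k(k−2)/2)·u²`. -/
theorem stmt0 (k : ℕ) (hk : 1 ≤ k) (u : ℝ) (hu : 0 ≤ u) :
    Real.exp u - Real.exp ((1 - (k : ℝ)) * u) ≥
      (k : ℝ) * u - ((k : ℝ) * ((k : ℝ) - 2) / 2) * u ^ 2 := by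
  have hkR : (1 : ℝ) ≤ (k : ℝ) := by exact_mod_cast hk
  set x : ℝ := ((k : ℝ) - 1) * u with hx
  have hx0 : 0 ≤ x := mul_nonneg (by linarith) hu
  have h1 : 1 + u + u ^ 2 / 2 ≤ Real.exp u := Real.quadratic_le_exp_of_nonneg hu
  have h2 : 1 + x + x ^ 2 / 2 ≤ Real.exp x := Real.quadratic_le_exp_of_nonneg hx0
  have hE : 0 < Real.exp x := Real.exp_pos x
  have h3 : Real.exp (-x) ≤ 1 - x + x ^ 2 / 2 := by
    rw [Real.exp_neg]
    rw [inv_le_iff_one_le_mul₀ hE]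
    nlinarith [sq_nonneg x, sq_nonneg (x ^ 2)]
  have heq : (1 - (k : ℝ)) * u = -x := by rw [hx]; ring
  rw [heq]
  nlinarith [h1, h3]
end

section
/- Let k ≥ 3 be an integer and let h be a C² real-valued function on an open set Ω ⊂ ℝ² satisfying Δh = 2k·h and 0 ≤ h ≤ 4/(k−2) on Ω. Then the function v := h − ((k−2)/2)h² satisfies Δv − 2k·v + k(k−2)v² ≤ 0 on Ω, i.e. v is a supersolution of the equation Δu = 2k·u − k(k−2)u². Moreover one has the identity Δv − 2k·v + k(k−2)v² = −k(k−2)²h³ + (1/4)k(k−2)³h⁴ − (k−2)|∇h|². -/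
/-! Write `v = φ ∘ h` with `φ y = y - c y²`, `c = (k - 2)/2`. The chain rule for the Laplacian,
`Δ(φ ∘ h) = φ'(h) Δh + φ''(h) |∇h|²`, together with `Δh = 2k h` turns
`Δv - 2k v + k(k - 2) v²` into a polynomial in `h` plus `-(k - 2)|∇h|²`; the terms of degree
at most two cancel, and the rest is `k(k - 2)² h³ ((k - 2)h - 4)/4 - (k - 2)|∇h|² ≤ 0`
because `0 ≤ h ≤ 4/(k - 2)`. -/

/-- The Euclidean Laplacian of `f : ℝ × ℝ → ℝ` at `p`, computed as the sum of the
second derivatives along the two coordinate directions. -/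
noncomputable def lap2 (f : ℝ × ℝ → ℝ) (p : ℝ × ℝ) : ℝ :=
  deriv (deriv (fun t : ℝ => f (p.1 + t, p.2))) 0 +
  deriv (deriv (fun t : ℝ => f (p.1, p.2 + t))) 0

/-- The squared norm of the gradient of `f : ℝ × ℝ → ℝ` at `p`. -/
noncomputable def gradSq (f : ℝ × ℝ → ℝ) (p : ℝ × ℝ) : ℝ :=
  (deriv (fun t : ℝ => f (p.1 + t, p.2)) 0) ^ 2 +
  (deriv (fun t : ℝ => f (p.1, p.2 + t)) 0) ^ 2

theorem deriv_deriv_comp {φ f : ℝ → ℝ} {x : ℝ} (hφ : ContDiffAt ℝ 2 φ (f x))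
    (hf : ContDiffAt ℝ 2 f x) :
    deriv (deriv (φ ∘ f)) x =
      deriv (deriv φ) (f x) * deriv f x ^ 2 + deriv φ (f x) * deriv (deriv f) x := by
  simpa [iteratedDeriv_succ, iteratedDeriv_one] using iteratedDeriv_comp_two hφ hf

section Plane

variable {h : ℝ × ℝ → ℝ} {p : ℝ × ℝ}

theorem contDiffAt_line_fst {n : WithTop ℕ∞} (hh : ContDiffAt ℝ n h p) :
    ContDiffAt ℝ n (fun t : ℝ => h (p.1 + t, p.2)) 0 :=
  ContDiffAt.comp (f := fun t : ℝ => (p.1 + t, p.2)) 0 (by simpa using hh) (by fun_prop)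

theorem contDiffAt_line_snd {n : WithTop ℕ∞} (hh : ContDiffAt ℝ n h p) :
    ContDiffAt ℝ n (fun t : ℝ => h (p.1, p.2 + t)) 0 :=
  ContDiffAt.comp (f := fun t : ℝ => (p.1, p.2 + t)) 0 (by simpa using hh) (by fun_prop)

theorem lap2_comp {φ : ℝ → ℝ} (hφ : ContDiffAt ℝ 2 φ (h p))
    (hh : ContDiffAt ℝ 2 h p) :
    lap2 (φ ∘ h) p = deriv φ (h p) * lap2 h p + deriv (deriv φ) (h p) * gradSq h p := by
  have h1 := deriv_deriv_comp (x := 0) (by simpa using hφ) (contDiffAt_line_fst hh)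
  have h2 := deriv_deriv_comp (x := 0) (by simpa using hφ) (contDiffAt_line_snd hh)
  simp only [add_zero] at h1 h2
  simp only [lap2, gradSq, Function.comp_def] at h1 h2 ⊢
  rw [h1, h2]
  ring

theorem lap2_sub_const_mul_sq (c : ℝ) (hh : ContDiffAt ℝ 2 h p) :
    lap2 (fun q => h q - c * h q ^ 2) p =
      (1 - 2 * c * h p) * lap2 h p - 2 * c * gradSq h p := by
  have hφ : ∀ y : ℝ, HasDerivAt (fun y : ℝ => y - c * y ^ 2) (1 - 2 * c * y) y := fun y =>
    ((hasDerivAt_id' y).sub ((hasDerivAt_pow 2 y).const_mul c)).congr_deriv (by ring)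
  have hφ' : ∀ y : ℝ, HasDerivAt (fun y : ℝ => 1 - 2 * c * y) (-2 * c) y := fun y =>
    (((hasDerivAt_id' y).const_mul (2 * c)).const_sub 1).congr_deriv (by ring)
  have hderiv : deriv (fun y : ℝ => y - c * y ^ 2) = fun y => 1 - 2 * c * y :=
    funext fun y => (hφ y).deriv
  have := lap2_comp (φ := fun y : ℝ => y - c * y ^ 2) (by fun_prop) hh
  rw [hderiv, (hφ' _).deriv] at this
  rw [← Function.comp_def (fun y : ℝ => y - c * y ^ 2) h, this]
  ring

end Plane

theorem supersolution_defect_nonpos {k y g : ℝ} (hk : 2 < k) (hy₀ : 0 ≤ y) (hy : y ≤ 4 / (k - 2))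
    (hg : 0 ≤ g) :
    -k * (k - 2) ^ 2 * y ^ 3 + (1 / 4) * k * (k - 2) ^ 3 * y ^ 4 - (k - 2) * g ≤ 0 := by
  have hk₂ : 0 < k - 2 := by linarith
  have hky : (k - 2) * y ≤ 4 := by rwa [le_div_iff₀ hk₂, mul_comm] at hy
  have hcubic : 0 ≤ k * (k - 2) ^ 2 * y ^ 3 := by positivity
  calc -k * (k - 2) ^ 2 * y ^ 3 + (1 / 4) * k * (k - 2) ^ 3 * y ^ 4 - (k - 2) * g
      = ((k - 2) * y - 4) / 4 * (k * (k - 2) ^ 2 * y ^ 3) - (k - 2) * g := by ring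
    _ ≤ 0 := by
      have := mul_nonpos_of_nonpos_of_nonneg (by linarith : ((k - 2) * y - 4) / 4 ≤ 0) hcubic
      linarith [mul_nonneg hk₂.le hg]

/-- if `h` is `C²` on an open set `Ω ⊆ ℝ²` with `Δh = 2k·h` and
`0 ≤ h ≤ 4/(k−2)`, then `v := h − ((k−2)/2)h²` satisfies
`Δv − 2k·v + k(k−2)v² ≤ 0` on `Ω`, together with the identity
`Δv − 2k·v + k(k−2)v² = −k(k−2)²h³ + (1/4)k(k−2)³h⁴ − (k−2)|∇h|²`. -/
theorem stmt1 (k : ℕ) (hk : 3 ≤ k) (Ω : Set (ℝ × ℝ)) (hΩ : IsOpen Ω)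
    (h : ℝ × ℝ → ℝ) (hreg : ContDiffOn ℝ 2 h Ω)
    (hlap : ∀ p ∈ Ω, lap2 h p = 2 * (k : ℝ) * h p)
    (hbd : ∀ p ∈ Ω, 0 ≤ h p ∧ h p ≤ 4 / ((k : ℝ) - 2))
    (v : ℝ × ℝ → ℝ) (hv : ∀ p, v p = h p - (((k : ℝ) - 2) / 2) * h p ^ 2) :
    ∀ p ∈ Ω,
      (lap2 v p - 2 * (k : ℝ) * v p + (k : ℝ) * ((k : ℝ) - 2) * v p ^ 2 ≤ 0) ∧
      (lap2 v p - 2 * (k : ℝ) * v p + (k : ℝ) * ((k : ℝ) - 2) * v p ^ 2 =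
        -(k : ℝ) * ((k : ℝ) - 2) ^ 2 * h p ^ 3
          + (1 / 4) * (k : ℝ) * ((k : ℝ) - 2) ^ 3 * h p ^ 4
          - ((k : ℝ) - 2) * gradSq h p) := by
  intro p hp
  have hh : ContDiffAt ℝ 2 h p := hreg.contDiffAt (hΩ.mem_nhds hp)
  have identity : lap2 v p - 2 * k * v p + k * (k - 2) * v p ^ 2 =
      -k * (k - 2) ^ 2 * h p ^ 3 + (1 / 4) * k * (k - 2) ^ 3 * h p ^ 4
        - (k - 2) * gradSq h p := by
    rw [show v = _ from funext hv, lap2_sub_const_mul_sq _ hh, hlap p hp]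
    ring
  have hk₂ : (2 : ℝ) < k := by exact_mod_cast hk
  refine ⟨identity ▸ supersolution_defect_nonpos hk₂ (hbd p hp).1 (hbd p hp).2 ?_, identity⟩
  unfold gradSq
  positivity
end

section
/- For an integer k ≥ 1, define ξ_k : [0, ∞) → [1, ∞) as the inverse of the strictly increasing function ξ ↦ ξ^k − ξ^{k−1} on [1, ∞). Then ξ_k(t) ≥ t^{1/k} for all t ≥ 0, ξ_k(t) − t^{1/k} → 1/k as t → +∞, and log(ξ_k(t)/t^{1/k}) is asymptotically equivalent to (1/k)·t^{−1/k} as t → +∞. -/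
open Filter Real Topology

/-! Put `u = ξ⁻¹`. Since `t = ξ^k (1 - u)`, we have `t^{1/k} = ξ (1 - u)^{1/k}`, so
`ξ - t^{1/k} = (1 - (1 - u)^{1/k}) / u` and `log (ξ / t^{1/k}) = -(1/k) log (1 - u)`.
As `t → ∞` we have `u → 0`, and both asymptotics are the derivatives of `y ↦ y^{1/k}` and of
`log` at `y = 1`, read off as limits of difference quotients. -/

theorem HasDerivAt.tendsto_mul_sub_sub_inv_atTop {f : ℝ → ℝ} {f' a : ℝ} (hf : HasDerivAt f f' a) :
    Tendsto (fun x : ℝ => x * (f a - f (a - x⁻¹))) atTop (𝓝 f') := by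
  have hto : Tendsto (fun x : ℝ => a - x⁻¹) atTop (𝓝[≠] a) := by
    refine tendsto_nhdsWithin_iff.mpr ⟨?_, ?_⟩
    · simpa using tendsto_inv_atTop_zero.const_sub a
    · filter_upwards [eventually_gt_atTop 0] with x hx
      simpa using hx.ne'
  refine ((hasDerivAt_iff_tendsto_slope.mp hf).comp hto).congr' ?_
  filter_upwards [eventually_ne_atTop 0] with x hx
  simp only [Function.comp_apply, slope_def_field, sub_sub_cancel_left]
  field_simp
  ring

theorem tendsto_sub_mul_one_sub_inv_rpow_atTop (c : ℝ) :
    Tendsto (fun x : ℝ => x - x * (1 - x⁻¹) ^ c) atTop (𝓝 c) := by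
  have hderiv : HasDerivAt (fun y : ℝ => y ^ c) c 1 := by
    simpa using hasDerivAt_rpow_const (x := 1) (p := c) (Or.inl one_ne_zero)
  refine hderiv.tendsto_mul_sub_sub_inv_atTop.congr fun x => ?_
  simp only [one_rpow]
  ring

theorem tendsto_one_sub_inv_rpow_atTop (c : ℝ) :
    Tendsto (fun x : ℝ => (1 - x⁻¹) ^ c) atTop (𝓝 1) := by
  have h := (tendsto_inv_atTop_zero.const_sub (1 : ℝ)).rpow_const (p := c) (Or.inl (by simp))
  simpa using h

theorem tendsto_log_div_mul_one_sub_inv_rpow_atTop {c : ℝ} (hc : c ≠ 0) :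
    Tendsto (fun x : ℝ => log (x / (x * (1 - x⁻¹) ^ c)) / (c * (x * (1 - x⁻¹) ^ c)⁻¹))
      atTop (𝓝 1) := by
  have hlog := (hasDerivAt_log one_ne_zero).tendsto_mul_sub_sub_inv_atTop
  rw [inv_one] at hlog
  refine (mul_one (1 : ℝ) ▸ hlog.mul (tendsto_one_sub_inv_rpow_atTop c)).congr' ?_
  filter_upwards [eventually_gt_atTop 1] with x hx
  have hu : 0 < 1 - x⁻¹ := sub_pos.mpr (inv_lt_one_of_one_lt₀ hx)
  have hx0 : x ≠ 0 := by positivity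
  have hpow : (1 - x⁻¹) ^ c ≠ 0 := (rpow_pos_of_pos hu c).ne'
  have hratio : x / (x * (1 - x⁻¹) ^ c) = ((1 - x⁻¹) ^ c)⁻¹ := by field_simp
  rw [hratio, log_inv, log_rpow hu, log_one]
  field_simp
  ring

theorem pow_sub_pow_pred_rpow_one_div {x : ℝ} (hx : 1 ≤ x) {k : ℕ} (hk : k ≠ 0) :
    (x ^ k - x ^ (k - 1)) ^ ((1 : ℝ) / k) = x * (1 - x⁻¹) ^ ((1 : ℝ) / k) := by
  have hx0 : 0 < x := zero_lt_one.trans_le hx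
  have hfactor : x ^ k - x ^ (k - 1) = x ^ k * (1 - x⁻¹) := by
    obtain ⟨n, rfl⟩ := Nat.exists_eq_add_one_of_ne_zero hk
    rw [Nat.add_sub_cancel]
    field_simp
    ring
  rw [hfactor, mul_rpow (by positivity) (sub_nonneg.mpr (inv_le_one_of_one_le₀ hx)),
    ← rpow_natCast, ← rpow_mul hx0.le, mul_one_div_cancel (by exact_mod_cast hk), rpow_one]

theorem mul_one_sub_inv_rpow_le_self {x c : ℝ} (hx : 1 ≤ x) (hc : 0 ≤ c) :
    x * (1 - x⁻¹) ^ c ≤ x := by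
  have hinv : 0 ≤ x⁻¹ := by positivity
  refine mul_le_of_le_one_right (by linarith) (rpow_le_one ?_ (by linarith) hc)
  linarith [inv_le_one_of_one_le₀ hx]

/-- for an integer `k ≥ 1`, let `ξ : [0,∞) → [1,∞)` be the inverse of
`ξ ↦ ξ^k − ξ^{k−1}` on `[1,∞)`.  Then `ξ(t) ≥ t^{1/k}` for all `t ≥ 0`,
`ξ(t) − t^{1/k} → 1/k` as `t → +∞`, and
`log(ξ(t)/t^{1/k}) ∼ (1/k)·t^{−1/k}` as `t → +∞`. -/
theorem stmt2 (k : ℕ) (hk : 1 ≤ k) (ξ : ℝ → ℝ)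
    (hξ : ∀ t : ℝ, 0 ≤ t → 1 ≤ ξ t ∧ ξ t ^ k - ξ t ^ (k - 1) = t) :
    (∀ t : ℝ, 0 ≤ t → t ^ ((1 : ℝ) / k) ≤ ξ t) ∧
    Tendsto (fun t : ℝ => ξ t - t ^ ((1 : ℝ) / k)) atTop (nhds (1 / (k : ℝ))) ∧
    Tendsto (fun t : ℝ =>
        Real.log (ξ t / t ^ ((1 : ℝ) / k)) / ((1 / (k : ℝ)) * t ^ (-(1 : ℝ) / k)))
      atTop (nhds 1) := by
  have hroot : ∀ t : ℝ, 0 ≤ t → t ^ ((1 : ℝ) / k) = ξ t * (1 - (ξ t)⁻¹) ^ ((1 : ℝ) / k) := by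
    intro t ht
    obtain ⟨hξ1, hξt⟩ := hξ t ht
    rw [← pow_sub_pow_pred_rpow_one_div hξ1 (by omega), hξt]
  have hlower : ∀ t : ℝ, 0 ≤ t → t ^ ((1 : ℝ) / k) ≤ ξ t := fun t ht =>
    (hroot t ht).trans_le (mul_one_sub_inv_rpow_le_self (hξ t ht).1 (by positivity))
  have hξtop : Tendsto ξ atTop atTop :=
    tendsto_atTop_mono' _ ((eventually_ge_atTop 0).mono hlower) (tendsto_rpow_atTop (by positivity))
  refine ⟨hlower, ?_, ?_⟩
  · refine ((tendsto_sub_mul_one_sub_inv_rpow_atTop ((1 : ℝ) / k)).comp hξtop).congr' ?_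
    filter_upwards [eventually_ge_atTop 0] with t ht
    rw [Function.comp_apply, hroot t ht]
  · have hc : (1 : ℝ) / k ≠ 0 := by positivity
    refine ((tendsto_log_div_mul_one_sub_inv_rpow_atTop hc).comp hξtop).congr' ?_
    filter_upwards [eventually_ge_atTop 0] with t ht
    rw [Function.comp_apply, neg_div, rpow_neg ht, hroot t ht]
end

section
/- Let F be a nonnegative subharmonic function on {w ∈ ℂ : |w| ≥ 1} such that ∫_{|w|≥1} F(w)/|w| dμ(w) < ∞, where μ is Lebesgue measure. Then F is bounded; more precisely, max_{|w|=r} F(w) ≤ max_{|w|=1} F(w) for every r ≥ 1. -/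
/-! The sub-mean value inequality on circles integrates to `π r² F(c) ≤ ∫_{B(c,r)} F`. For
`‖w‖ = R ≥ 2` the disc `B(w, R/2)` lies in `R/2 ≤ ‖v‖ ≤ 3R/2`, so `π R F(w) ≤ 6 ∫ F/‖v‖`, and `F`
tends to `0` at infinity. The maximum principle on the annulus `1 ≤ ‖v‖ ≤ R` bounds `F(w)` by the
larger of the maxima of `F` on the two boundary circles; the outer one tends to `0` as `R → ∞`.

The maximum principle is proved by perturbing `F` to `F + ε‖·‖²`, whose circle averages exceed the
sub-mean value bound by `ερ²`, so that it cannot attain its maximum in the interior. -/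

open MeasureTheory Real Metric Set

theorem circleAverage_norm_sq (c : ℂ) (ρ : ℝ) :
    circleAverage (fun v => ‖v‖ ^ 2) c ρ = ‖c‖ ^ 2 + ρ ^ 2 := by
  have h (θ : ℝ) : ‖circleMap c ρ θ‖ ^ 2
      = (‖c‖ ^ 2 + ρ ^ 2) + (2 * ρ * c.re * cos θ + 2 * ρ * c.im * sin θ) := by
    simp only [circleMap, Complex.sq_norm, Complex.normSq_apply, Complex.exp_mul_I,
      Complex.add_re, Complex.add_im, Complex.mul_re, Complex.mul_im, Complex.cos_ofReal_re,
      Complex.sin_ofReal_re, Complex.cos_ofReal_im, Complex.sin_ofReal_im, Complex.I_re,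
      Complex.I_im, Complex.ofReal_re, Complex.ofReal_im]
    linear_combination ρ ^ 2 * cos_sq_add_sin_sq θ
  have hosc : Continuous fun θ => 2 * ρ * c.re * cos θ + 2 * ρ * c.im * sin θ := by fun_prop
  have hosc_int : ∫ θ in (0)..(2 * π), (2 * ρ * c.re * cos θ + 2 * ρ * c.im * sin θ) = 0 := by
    rw [intervalIntegral.integral_add
        ((by fun_prop : Continuous fun θ => 2 * ρ * c.re * cos θ).intervalIntegrable _ _)
        ((by fun_prop : Continuous fun θ => 2 * ρ * c.im * sin θ).intervalIntegrable _ _),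
      intervalIntegral.integral_const_mul, intervalIntegral.integral_const_mul,
      integral_cos, integral_sin]
    simp
  rw [circleAverage_def, smul_eq_mul]
  simp only [h]
  rw [intervalIntegral.integral_add intervalIntegrable_const (hosc.intervalIntegrable _ _),
    hosc_int, intervalIntegral.integral_const]
  field_simp
  simp

section Polar

variable {E : Type*} [NormedAddCommGroup E] [NormedSpace ℝ E]

theorem setIntegral_ball_eq_setIntegral_polar (f : ℂ → E) (c : ℂ) (r : ℝ) :
    ∫ v in ball c r, f v = ∫ p in Ioo 0 r ×ˢ Ioo (-π) π, p.1 • f (circleMap c p.1 p.2) := by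
  have hsymm (p : ℝ × ℝ) : c + Complex.polarCoord.symm p = circleMap c p.1 p.2 := by
    simp [circleMap, Complex.exp_mul_I, ← Complex.ofReal_cos, ← Complex.ofReal_sin]
  have hmeas : MeasurableSet ((fun p : ℝ × ℝ => circleMap c p.1 p.2) ⁻¹' ball c r) :=
    measurableSet_ball.preimage (by fun_prop)
  have htarget : polarCoord.target ∩ (fun p : ℝ × ℝ => circleMap c p.1 p.2) ⁻¹' ball c r
      = Ioo 0 r ×ˢ Ioo (-π) π := by
    ext ⟨ρ, θ⟩
    simp only [polarCoord_target, mem_inter_iff, mem_prod, mem_Ioi, mem_Ioo, mem_preimage,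
      mem_ball, dist_eq_norm, circleMap_sub_center, norm_circleMap_zero]
    constructor
    · rintro ⟨⟨hρ, hθ⟩, hr⟩; exact ⟨⟨hρ, (abs_of_pos hρ) ▸ hr⟩, hθ⟩
    · rintro ⟨⟨hρ, hr⟩, hθ⟩; exact ⟨⟨hρ, hθ⟩, (abs_of_pos hρ).symm ▸ hr⟩
  rw [← integral_indicator measurableSet_ball, ← integral_add_left_eq_self _ c,
    ← Complex.integral_comp_polarCoord_symm]
  have hind (p : ℝ × ℝ) : p.1 • (ball c r).indicator f (circleMap c p.1 p.2)
      = ((fun p : ℝ × ℝ => circleMap c p.1 p.2) ⁻¹' ball c r).indicator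
          (fun p => p.1 • f (circleMap c p.1 p.2)) p := by
    rw [indicator_smul_apply, ← indicator_comp_right]; rfl
  simp only [hsymm, hind]
  rw [setIntegral_indicator hmeas, htarget]

theorem circleAverage_eq_setIntegral_Ioo [CompleteSpace E] (f : ℂ → E) (c : ℂ) (R : ℝ) :
    circleAverage f c R = (2 * π)⁻¹ • ∫ θ in Ioo (-π) π, f (circleMap c R θ) := by
  rw [circleAverage_eq_integral_add (-π), intervalIntegral.integral_comp_add_right
      (fun θ => f (circleMap c R θ)), intervalIntegral.integral_of_le (by linarith [pi_pos]),
    integral_Ioc_eq_integral_Ioo]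
  ring_nf

theorem setIntegral_ball_eq_integral_circleAverage [CompleteSpace E] {f : ℂ → E} {c : ℂ} {r : ℝ}
    (hr : 0 ≤ r) (hf : ContinuousOn f (closedBall c r)) :
    ∫ v in ball c r, f v = ∫ ρ in (0)..r, (2 * π * ρ) • circleAverage f c ρ := by
  have hcont : ContinuousOn (fun p : ℝ × ℝ => p.1 • f (circleMap c p.1 p.2))
      (Icc 0 r ×ˢ Icc (-π) π) := by
    refine continuousOn_fst.smul (hf.comp (by fun_prop) fun p hp => ?_)
    simpa [dist_eq_norm, circleMap_sub_center, abs_of_nonneg hp.1.1] using hp.1.2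
  have hint : IntegrableOn (fun p : ℝ × ℝ => p.1 • f (circleMap c p.1 p.2))
      (Ioo 0 r ×ˢ Ioo (-π) π) :=
    (hcont.integrableOn_compact (isCompact_Icc.prod isCompact_Icc)).mono_set
      (prod_mono Ioo_subset_Icc_self Ioo_subset_Icc_self)
  rw [setIntegral_ball_eq_setIntegral_polar, Measure.volume_eq_prod, setIntegral_prod _ hint,
    intervalIntegral.integral_of_le hr, integral_Ioc_eq_integral_Ioo]
  refine setIntegral_congr_fun measurableSet_Ioo fun ρ _ => ?_
  rw [integral_smul, circleAverage_eq_setIntegral_Ioo, smul_smul]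
  congr 1
  field_simp

theorem mul_le_setIntegral_ball_of_le_circleAverage {F : ℂ → ℝ} {c : ℂ} {r : ℝ} (hr : 0 ≤ r)
    (hF : ContinuousOn F (closedBall c r)) (h : ∀ ρ ∈ Ioo 0 r, F c ≤ circleAverage F c ρ) :
    π * r ^ 2 * F c ≤ ∫ v in ball c r, F v := by
  have havg : ContinuousOn (circleAverage F c) (Icc 0 r) :=
    ContinuousOn.circleAverage (hF.mono fun z hz => by simpa [dist_eq_norm] using hz.2)
      fun ρ hρ => hρ.1
  rw [setIntegral_ball_eq_integral_circleAverage hr hF]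
  calc π * r ^ 2 * F c = ∫ ρ in (0)..r, 2 * π * ρ * F c := by
        rw [intervalIntegral.integral_mul_const, intervalIntegral.integral_const_mul, integral_id]
        ring
    _ ≤ ∫ ρ in (0)..r, (2 * π * ρ) • circleAverage F c ρ := by
        refine intervalIntegral.integral_mono_on_of_le_Ioo hr
          ((by fun_prop : Continuous fun ρ => 2 * π * ρ * F c).intervalIntegrable _ _)
          ((continuousOn_const.mul continuousOn_id).smul havg |>.intervalIntegrable_of_Icc hr)
          fun ρ hρ => ?_
        rw [smul_eq_mul]
        exact mul_le_mul_of_nonneg_left (h ρ hρ) (by have := hρ.1; positivity)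

end Polar

def SubMeanValueOn (F : ℂ → ℝ) (U : Set ℂ) : Prop :=
  ∀ w ∈ U, ∀ ρ : ℝ, 0 < ρ → closedBall w ρ ⊆ U → F w ≤ circleAverage F w ρ

namespace SubMeanValueOn

variable {F : ℂ → ℝ} {U K : Set ℂ}

theorem mono {V : Set ℂ} (hF : SubMeanValueOn F U) (hVU : V ⊆ U) : SubMeanValueOn F V :=
  fun w hw ρ hρ hball => hF w (hVU hw) ρ hρ (hball.trans hVU)

theorem exists_isMaxOn_add_norm_sq_mem_diff (hF : SubMeanValueOn F U) (hU : IsOpen U)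
    (hUK : U ⊆ K) (hK : IsCompact K) (hFK : ContinuousOn F K) (hKne : K.Nonempty) {ε : ℝ}
    (hε : 0 < ε) : ∃ z ∈ K \ U, IsMaxOn (fun v => F v + ε * ‖v‖ ^ 2) K z := by
  obtain ⟨z, hzK, hmax⟩ :=
    hK.exists_isMaxOn hKne (hFK.add (continuous_const.mul (continuous_norm.pow 2)).continuousOn)
  refine ⟨z, ⟨hzK, fun hzU => ?_⟩, hmax⟩
  obtain ⟨ρ, hρ, hball⟩ := nhds_basis_closedBall.mem_iff.mp (hU.mem_nhds hzU)
  have hsphere : sphere z |ρ| ⊆ K := by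
    rw [abs_of_pos hρ]; exact sphere_subset_closedBall.trans (hball.trans hUK)
  have hFint : CircleIntegrable F z ρ := (hFK.mono hsphere).circleIntegrable'
  have hqint : CircleIntegrable (fun v => ε * ‖v‖ ^ 2) z ρ :=
    (continuous_const.mul (continuous_norm.pow 2)).continuousOn.circleIntegrable'
  have hle : circleAverage (fun v => F v + ε * ‖v‖ ^ 2) z ρ ≤ F z + ε * ‖z‖ ^ 2 :=
    circleAverage_mono_on_of_le_circle (hFint.add hqint) fun v hv => hmax (hsphere hv)
  have hq : circleAverage (fun v => ε * ‖v‖ ^ 2) z ρ = ε * (‖z‖ ^ 2 + ρ ^ 2) := by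
    rw [← circleAverage_norm_sq, ← smul_eq_mul, ← circleAverage_fun_smul]
    rfl
  rw [circleAverage_fun_add hFint hqint, hq] at hle
  nlinarith [hF z hzU ρ hρ hball, mul_pos hε (pow_pos hρ 2)]

theorem le_of_forall_mem_diff_le (hF : SubMeanValueOn F U) (hU : IsOpen U) (hUK : U ⊆ K)
    (hK : IsCompact K) (hFK : ContinuousOn F K) {M : ℝ} (hM : ∀ z ∈ K \ U, F z ≤ M) :
    ∀ w ∈ K, F w ≤ M := by
  intro w hw
  obtain ⟨C, hC⟩ := hK.isBounded.exists_norm_le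
  refine le_of_forall_pos_le_add fun ε hε => ?_
  obtain ⟨z, ⟨hzK, hzU⟩, hmax⟩ :=
    hF.exists_isMaxOn_add_norm_sq_mem_diff hU hUK hK hFK ⟨w, hw⟩
      (div_pos hε (by positivity : (0 : ℝ) < C ^ 2 + 1))
  have hGwz : F w + ε / (C ^ 2 + 1) * ‖w‖ ^ 2 ≤ F z + ε / (C ^ 2 + 1) * ‖z‖ ^ 2 := hmax hw
  have hz : ε / (C ^ 2 + 1) * ‖z‖ ^ 2 ≤ ε := by
    rw [div_mul_eq_mul_div, div_le_iff₀ (by positivity)]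
    have := pow_le_pow_left₀ (norm_nonneg z) (hC z hzK) 2
    nlinarith
  nlinarith [hM z ⟨hzK, hzU⟩, sq_nonneg ‖w‖, div_pos hε (by positivity : (0 : ℝ) < C ^ 2 + 1)]

theorem le_of_le_on_annulus_boundary {a b M : ℝ}
    (hF : SubMeanValueOn F {v | a < ‖v‖ ∧ ‖v‖ < b})
    (hcont : ContinuousOn F {v | a ≤ ‖v‖ ∧ ‖v‖ ≤ b})
    (ha : ∀ z : ℂ, ‖z‖ = a → F z ≤ M) (hb : ∀ z : ℂ, ‖z‖ = b → F z ≤ M) {w : ℂ} (hwa : a ≤ ‖w‖)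
    (hwb : ‖w‖ ≤ b) : F w ≤ M := by
  have hK : IsCompact {v : ℂ | a ≤ ‖v‖ ∧ ‖v‖ ≤ b} :=
    (isCompact_closedBall 0 b).of_isClosed_subset
      ((isClosed_le continuous_const continuous_norm).inter
        (isClosed_le continuous_norm continuous_const))
      fun v hv => mem_closedBall_zero_iff.mpr hv.2
  have hU : IsOpen {v : ℂ | a < ‖v‖ ∧ ‖v‖ < b} :=
    (isOpen_lt continuous_const continuous_norm).inter (isOpen_lt continuous_norm continuous_const)
  refine hF.le_of_forall_mem_diff_le hU (fun _ hv => And.imp le_of_lt le_of_lt hv) hK hcont ?_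
    w ⟨hwa, hwb⟩
  rintro z ⟨⟨hza, hzb⟩, hzU⟩
  rcases hza.eq_or_lt with hza | hza
  · exact ha z hza.symm
  · exact hb z (hzb.eq_of_not_lt fun hzb => hzU ⟨hza, hzb⟩)

end SubMeanValueOn

theorem pi_mul_norm_mul_le_setIntegral_div_norm {F : ℂ → ℝ}
    (hcont : ContinuousOn F {w | 1 ≤ ‖w‖}) (hnn : ∀ w : ℂ, 1 ≤ ‖w‖ → 0 ≤ F w)
    (hsub : SubMeanValueOn F {w | 1 < ‖w‖})
    (hint : IntegrableOn (fun w => F w / ‖w‖) {w | 1 ≤ ‖w‖}) {w : ℂ} (hw : 2 ≤ ‖w‖) :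
    π * ‖w‖ * F w ≤ 6 * ∫ v in {v | 1 ≤ ‖v‖}, F v / ‖v‖ := by
  set r := ‖w‖ / 2 with hr
  have hnorm {v : ℂ} {ρ : ℝ} (hv : v ∈ closedBall w ρ) : ‖w‖ - ρ ≤ ‖v‖ ∧ ‖v‖ ≤ ‖w‖ + ρ := by
    have := abs_le.mp ((abs_norm_sub_norm_le v w).trans (mem_closedBall_iff_norm.mp hv))
    constructor <;> linarith
  have hball : ball w r ⊆ {v | 1 ≤ ‖v‖} := fun v hv =>
    show 1 ≤ ‖v‖ by linarith [(hnorm (ball_subset_closedBall hv)).1, hr]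
  have hFball : ContinuousOn F (closedBall w r) :=
    hcont.mono fun v hv => show 1 ≤ ‖v‖ by linarith [(hnorm hv).1, hr]
  have hmean : π * r ^ 2 * F w ≤ ∫ v in ball w r, F v :=
    mul_le_setIntegral_ball_of_le_circleAverage (by positivity) hFball fun ρ hρ =>
      hsub w (show 1 < ‖w‖ by linarith) ρ hρ.1 fun v hv =>
      show 1 < ‖v‖ by linarith [(hnorm hv).1, hρ.2, hr]
  have hweight : ∫ v in ball w r, F v ≤ ∫ v in ball w r, 3 * r * (F v / ‖v‖) := by
    refine setIntegral_mono_on ((hFball.integrableOn_compact (isCompact_closedBall w r)).mono_set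
      ball_subset_closedBall) ((hint.mono_set hball).const_mul _) measurableSet_ball fun v hv => ?_
    have hv' := hnorm (ball_subset_closedBall hv)
    rw [mul_div_assoc', le_div_iff₀ (by linarith), mul_comm (3 * r)]
    exact mul_le_mul_of_nonneg_left (by linarith) (hnn v (hball hv))
  have htail : ∫ v in ball w r, F v / ‖v‖ ≤ ∫ v in {v | 1 ≤ ‖v‖}, F v / ‖v‖ :=
    setIntegral_mono_set hint
      (ae_restrict_of_forall_mem (measurableSet_le measurable_const measurable_norm)
        fun v hv => div_nonneg (hnn v hv) (norm_nonneg v))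
      hball.eventuallyLE
  rw [integral_const_mul] at hweight
  have hrpos : 0 < r := by linarith
  have key : r * (π * r * F w) ≤ r * (3 * ∫ v in {v | 1 ≤ ‖v‖}, F v / ‖v‖) := by
    linarith [mul_le_mul_of_nonneg_left htail (by positivity : 0 ≤ 3 * r)]
  have := le_of_mul_le_mul_left key hrpos
  rw [hr] at this
  linarith

/-- let `F` be a nonnegative continuous function on `{|w| ≥ 1}`
satisfying the sub-mean value property (subharmonicity) on `{|w| > 1}`, and
suppose `∫_{|w|≥1} F(w)/|w| dμ(w) < ∞`.  Then `F` is bounded; more precisely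
`F(w) ≤ max_{|v|=1} F(v)` for every `w` with `|w| ≥ 1`. -/
theorem stmt5 (F : ℂ → ℝ)
    (hcont : ContinuousOn F {w : ℂ | 1 ≤ ‖w‖})
    (hnn : ∀ w : ℂ, 1 ≤ ‖w‖ → 0 ≤ F w)
    (hsub : ∀ w : ℂ, 1 < ‖w‖ → ∀ ρ : ℝ, 0 < ρ →
      Metric.closedBall w ρ ⊆ {w : ℂ | 1 < ‖w‖} →
      F w ≤ (1 / (2 * π)) * ∫ θ in (0 : ℝ)..(2 * π),
        F (w + ρ * Complex.exp (θ * Complex.I)))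
    (hint : IntegrableOn (fun w : ℂ => F w / ‖w‖)
      {w : ℂ | 1 ≤ ‖w‖} volume) :
    ∀ w : ℂ, 1 ≤ ‖w‖ →
      F w ≤ sSup (F '' {v : ℂ | ‖v‖ = 1}) := by
  have hsub' : SubMeanValueOn F {w | 1 < ‖w‖} := fun w hw ρ hρ hball => by
    simpa only [circleAverage_def, circleMap, smul_eq_mul, one_div] using hsub w hw ρ hρ hball
  have hbdd : BddAbove (F '' {v : ℂ | ‖v‖ = 1}) := by
    refine IsCompact.bddAbove (IsCompact.image_of_continuousOn ?_ (hcont.mono fun v hv => hv.ge))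
    simpa only [sphere, dist_zero_right] using isCompact_sphere (0 : ℂ) 1
  intro w hw
  set B := ∫ v in {v : ℂ | 1 ≤ ‖v‖}, F v / ‖v‖
  have hM : 0 ≤ sSup (F '' {v : ℂ | ‖v‖ = 1}) :=
    (hnn 1 (by simp)).trans (le_csSup hbdd ⟨1, by simp, rfl⟩)
  refine le_of_forall_pos_le_add fun ε hε => ?_
  obtain ⟨R, hR2, hwR, hBR⟩ : ∃ R, 2 ≤ R ∧ ‖w‖ ≤ R ∧ 6 * B ≤ π * R * ε := by
    refine ⟨max (max 2 ‖w‖) (6 * B / (π * ε)), by simp, by simp, ?_⟩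
    have h := le_max_right (max 2 ‖w‖) (6 * B / (π * ε))
    rw [div_le_iff₀ (by positivity)] at h
    linarith
  refine (hsub'.mono fun v hv => hv.1).le_of_le_on_annulus_boundary
    (hcont.mono fun v hv => hv.1) (fun z hz => ?_) (fun z hz => ?_) hw hwR
  · exact (le_csSup hbdd ⟨z, hz, rfl⟩).trans (le_add_of_nonneg_right hε.le)
  · have hdecay := pi_mul_norm_mul_le_setIntegral_div_norm hcont hnn hsub' hint (hz ▸ hR2)
    rw [hz] at hdecay
    have : F z ≤ ε := le_of_mul_le_mul_left (hdecay.trans hBR) (by positivity)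
    linarith
end

section
/- Let ω = e^{2πi/3} and for i, j ∈ {1,2,3} define μ_{ij} : 𝕊¹ → ℝ by μ_{ij}(v) = √2·Re[(ω^{1−i} − ω^{1−j})v], and set μ(v) = max_{i,j} μ_{ij}(v). Then: (a) the maximum of μ over 𝕊¹ equals √6 and is achieved exactly at the v with v³ = ±i; (b) the minimum of μ over 𝕊¹ equals 3√2/2 and is achieved exactly at the v with v³ = ±1; (c) if v³ ≠ ±1 then there is a unique pair (i,j) with μ_{ij}(v) = μ(v); (d) for each v with v³ = ±1 there are exactly two pairs (i,j) with i ≠ j and μ_{ij}(v) = μ(v). -/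
open Real

/-- `ω = e^{2πi/3}`. -/
noncomputable def omega3 : ℂ := Complex.exp (2 * Real.pi * Complex.I / 3)

/-- `μ_{ij}(v) = √2·Re[(ω^{1−i} − ω^{1−j})v]` for `i,j ∈ {1,2,3}`; here the index
`i ∈ {1,2,3}` is encoded by `i : Fin 3` (representing `i+1`), so that the
exponent `1−(i+1)` is `−i`. -/
noncomputable def muIJ (i j : Fin 3) (v : ℂ) : ℝ :=
  Real.sqrt 2 * ((omega3 ^ (-(i : ℤ)) - omega3 ^ (-(j : ℤ))) * v).re

/-- `μ(v) = max_{i,j} μ_{ij}(v)`. -/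
noncomputable def muMax (v : ℂ) : ℝ :=
  Finset.univ.sup' Finset.univ_nonempty
    (fun p : Fin 3 × Fin 3 => muIJ p.1 p.2 v)

/-!
Write `a_k = Re(ω^{-k} v)`, so that `μ_{ij}(v) = √2 (a_i - a_j)` and `μ(v) = √2 (M - m)` for
`M = max a_k`, `m = min a_k`. The `a_k` sum to `0`, their squares sum to `3/2`, and each is a root
of the Chebyshev equation `4t³ - 3t = Re(v³)`. Subtracting this equation at `M` and at `m` gives
`M² + Mm + m² = 3/4`, hence `(M - m)² = 3/4 - 3Mm` and `Re(v³) = -4Mm(M + m)`. Summing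
`(M - a_k)(a_k - m) ≥ 0` gives `Mm ≤ -1/2`, with equality iff every `a_k` is extremal; and
`Re(v³)² - 1 = (2Mm + 1)²(4Mm - 1)`. So `(M - m)² ∈ [9/4, 3]`: the top is reached iff
`M + m = 0`, i.e. `Re(v³) = 0`, the bottom iff `Mm = -1/2`, i.e. `Im(v³) = 0`. The maximizing
pairs are `argmax × argmin`, so there are one or two of them according as some `a_k` lies strictly
between `m` and `M` or not.
-/

open Finset

structure IsChebyshevTriple (a : Fin 3 → ℝ) (r : ℝ) : Prop where
  sum_eq_zero : ∑ k, a k = 0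
  sum_sq : ∑ k, a k ^ 2 = 3 / 2
  chebyshev : ∀ k, 4 * a k ^ 3 - 3 * a k = r

namespace IsChebyshevTriple

variable {a : Fin 3 → ℝ} {r M m : ℝ}

lemma min_lt_max (h : IsChebyshevTriple a r) (hM : IsGreatest (Set.range a) M)
    (hm : IsLeast (Set.range a) m) : m < M := by
  obtain ⟨i, rfl⟩ := hM.1
  refine lt_of_le_of_ne (hm.2 ⟨i, rfl⟩) fun hmM => ?_
  have hconst (k : Fin 3) : a k = a i := le_antisymm (hM.2 ⟨k, rfl⟩) (hmM ▸ hm.2 ⟨k, rfl⟩)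
  have hsum := h.sum_eq_zero
  have hsq := h.sum_sq
  simp only [Fin.sum_univ_three, hconst] at hsum hsq
  nlinarith

lemma sq_add_mul_add_sq (h : IsChebyshevTriple a r) (hM : IsGreatest (Set.range a) M)
    (hm : IsLeast (Set.range a) m) : M ^ 2 + M * m + m ^ 2 = 3 / 4 := by
  have hne : M - m ≠ 0 := sub_ne_zero.2 (h.min_lt_max hM hm).ne'
  obtain ⟨i, rfl⟩ := hM.1
  obtain ⟨j, rfl⟩ := hm.1
  have hfactor : (a i - a j) * (4 * (a i ^ 2 + a i * a j + a j ^ 2) - 3) = 0 := by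
    linear_combination h.chebyshev i - h.chebyshev j
  linarith [(mul_eq_zero.1 hfactor).resolve_left hne]

lemma eq_neg_four_mul_mul_add (h : IsChebyshevTriple a r) (hM : IsGreatest (Set.range a) M)
    (hm : IsLeast (Set.range a) m) : r = -4 * (M * m) * (M + m) := by
  have hsq := h.sq_add_mul_add_sq hM hm
  obtain ⟨i, rfl⟩ := hM.1
  linear_combination -h.chebyshev i + 4 * a i * hsq

lemma sum_sub_mul_sub (h : IsChebyshevTriple a r) :
    ∑ k, (M - a k) * (a k - m) = -3 / 2 - 3 * (M * m) := by
  have hsum := h.sum_eq_zero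
  have hsq := h.sum_sq
  simp only [Fin.sum_univ_three] at hsum hsq ⊢
  linear_combination (M + m) * hsum - hsq

lemma mul_le_neg_half (h : IsChebyshevTriple a r) (hM : IsGreatest (Set.range a) M)
    (hm : IsLeast (Set.range a) m) : M * m ≤ -1 / 2 := by
  have := sum_nonneg fun k (_ : k ∈ univ) =>
    mul_nonneg (sub_nonneg.2 (hM.2 ⟨k, rfl⟩)) (sub_nonneg.2 (hm.2 ⟨k, rfl⟩))
  linarith [h.sum_sub_mul_sub (M := M) (m := m)]

lemma mul_eq_neg_half_iff (h : IsChebyshevTriple a r) (hM : IsGreatest (Set.range a) M)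
    (hm : IsLeast (Set.range a) m) : M * m = -1 / 2 ↔ ∀ k, a k = M ∨ a k = m := by
  have hsum := h.sum_sub_mul_sub (M := M) (m := m)
  calc M * m = -1 / 2 ↔ ∑ k, (M - a k) * (a k - m) = 0 := by
        rw [hsum]; constructor <;> intro <;> linarith
    _ ↔ ∀ k ∈ univ, (M - a k) * (a k - m) = 0 := sum_eq_zero_iff_of_nonneg fun k _ =>
        mul_nonneg (sub_nonneg.2 (hM.2 ⟨k, rfl⟩)) (sub_nonneg.2 (hm.2 ⟨k, rfl⟩))
    _ ↔ ∀ k, a k = M ∨ a k = m := by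
        simp only [mem_univ, true_imp_iff, mul_eq_zero, sub_eq_zero, eq_comm]

lemma sub_sq_eq (h : IsChebyshevTriple a r) (hM : IsGreatest (Set.range a) M)
    (hm : IsLeast (Set.range a) m) : (M - m) ^ 2 = 3 / 4 - 3 * (M * m) := by
  linear_combination h.sq_add_mul_add_sq hM hm

lemma add_sq_eq (h : IsChebyshevTriple a r) (hM : IsGreatest (Set.range a) M)
    (hm : IsLeast (Set.range a) m) : (M + m) ^ 2 = 3 / 4 + M * m := by
  linear_combination h.sq_add_mul_add_sq hM hm

lemma sub_sq_le_three (h : IsChebyshevTriple a r) (hM : IsGreatest (Set.range a) M)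
    (hm : IsLeast (Set.range a) m) : (M - m) ^ 2 ≤ 3 := by
  nlinarith [h.sub_sq_eq hM hm, h.add_sq_eq hM hm, sq_nonneg (M + m)]

lemma sub_sq_eq_three_iff (h : IsChebyshevTriple a r) (hM : IsGreatest (Set.range a) M)
    (hm : IsLeast (Set.range a) m) : (M - m) ^ 2 = 3 ↔ r = 0 := by
  have hmul : M * m ≠ 0 := by linarith [h.mul_le_neg_half hM hm]
  rw [h.eq_neg_four_mul_mul_add hM hm, h.sub_sq_eq hM hm]
  calc 3 / 4 - 3 * (M * m) = 3 ↔ (M + m) ^ 2 = 0 := by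
        rw [h.add_sq_eq hM hm]; constructor <;> intro <;> linarith
    _ ↔ -4 * (M * m) * (M + m) = 0 := by simp [hmul]

lemma nine_div_four_le_sub_sq (h : IsChebyshevTriple a r) (hM : IsGreatest (Set.range a) M)
    (hm : IsLeast (Set.range a) m) : 9 / 4 ≤ (M - m) ^ 2 := by
  linarith [h.sub_sq_eq hM hm, h.mul_le_neg_half hM hm]

lemma mul_eq_neg_half_iff_sq_eq_one (h : IsChebyshevTriple a r)
    (hM : IsGreatest (Set.range a) M) (hm : IsLeast (Set.range a) m) :
    M * m = -1 / 2 ↔ r ^ 2 = 1 := by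
  have hle := h.mul_le_neg_half hM hm
  have hr : r ^ 2 - 1 = (2 * (M * m) + 1) ^ 2 * (4 * (M * m) - 1) := by
    linear_combination (r - 4 * (M * m) * (M + m)) * h.eq_neg_four_mul_mul_add hM hm +
      16 * (M * m) ^ 2 * h.add_sq_eq hM hm
  have hneg : 4 * (M * m) - 1 ≠ 0 := by linarith
  rw [← sub_eq_zero (a := r ^ 2), hr, mul_eq_zero, or_iff_left hneg, sq_eq_zero_iff]
  constructor <;> intro <;> linarith

end IsChebyshevTriple

lemma Finset.card_mul_card_of_union_eq_univ {α : Type*} [Fintype α] [DecidableEq α]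
    (hα : Fintype.card α = 3) {S T : Finset α} (hST : Disjoint S T) (hS : S.Nonempty)
    (hT : T.Nonempty) (hU : S ∪ T = univ) : #S * #T = 2 := by
  have hcard := card_union_of_disjoint hST
  rw [hU, card_univ, hα] at hcard
  have hS1 := hS.card_pos
  have hT1 := hT.card_pos
  have hS2 : #S ≤ 2 := by omega
  interval_cases #S <;> omega

lemma Finset.card_mul_card_of_union_ne_univ {α : Type*} [Fintype α] [DecidableEq α]
    (hα : Fintype.card α = 3) {S T : Finset α} (hST : Disjoint S T) (hS : S.Nonempty)
    (hT : T.Nonempty) (hU : S ∪ T ≠ univ) : #S * #T = 1 := by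
  have hcard := card_union_of_disjoint hST
  have hlt := (card_lt_iff_ne_univ _).2 hU
  rw [hcard, hα] at hlt
  have hS1 := hS.card_pos
  have hT1 := hT.card_pos
  rw [show #S = 1 by omega, show #T = 1 by omega]

lemma sub_eq_sub_iff_of_isGreatest_of_isLeast {ι : Type*} {a : ι → ℝ} {M m : ℝ}
    (hM : IsGreatest (Set.range a) M) (hm : IsLeast (Set.range a) m) (i j : ι) :
    a i - a j = M - m ↔ a i = M ∧ a j = m := by
  have hi := hM.2 ⟨i, rfl⟩
  have hj := hm.2 ⟨j, rfl⟩
  exact ⟨fun h => ⟨by linarith, by linarith⟩, fun ⟨hi, hj⟩ => by rw [hi, hj]⟩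

namespace Complex

variable {w : ℂ}

lemma im_sq_of_norm_eq_one (hw : ‖w‖ = 1) : w.im ^ 2 = 1 - w.re ^ 2 := by
  rw [← sq_norm_sub_sq_re, hw, one_pow]

lemma two_mul_re_sq_of_norm_eq_one (hw : ‖w‖ = 1) : 2 * w.re ^ 2 = 1 + (w ^ 2).re := by
  rw [pow_two w, mul_re]
  linear_combination im_sq_of_norm_eq_one hw

lemma re_pow_three_of_norm_eq_one (hw : ‖w‖ = 1) : (w ^ 3).re = 4 * w.re ^ 3 - 3 * w.re := by
  simp only [pow_succ, pow_zero, one_mul, mul_re, mul_im]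
  linear_combination -3 * w.re * im_sq_of_norm_eq_one hw

lemma re_sq_eq_one_iff_im_eq_zero (hw : ‖w‖ = 1) : w.re ^ 2 = 1 ↔ w.im = 0 := by
  rw [← sq_eq_zero_iff, im_sq_of_norm_eq_one hw, sub_eq_zero, eq_comm]

lemma eq_I_or_eq_neg_I_iff_of_norm_eq_one (hw : ‖w‖ = 1) : w = I ∨ w = -I ↔ w.re = 0 := by
  refine ⟨by rintro (rfl | rfl) <;> simp, fun hre => ?_⟩
  have him : (w.im - 1) * (w.im + 1) = 0 := by
    linear_combination im_sq_of_norm_eq_one hw - w.re * hre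
  rcases mul_eq_zero.1 him with h | h
  · exact Or.inl (ext hre (by simp; linarith))
  · exact Or.inr (ext (by simpa using hre) (by simp; linarith))

lemma eq_one_or_eq_neg_one_iff_of_norm_eq_one (hw : ‖w‖ = 1) :
    w = 1 ∨ w = -1 ↔ w.im = 0 := by
  refine ⟨by rintro (rfl | rfl) <;> simp, fun him => ?_⟩
  have hre : (w.re - 1) * (w.re + 1) = 0 := by
    linear_combination im_sq_of_norm_eq_one hw - w.im * him
  rcases mul_eq_zero.1 hre with h | h
  · exact Or.inl (ext (by simp; linarith) him)
  · exact Or.inr (ext (by simp; linarith) (by simpa using him))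

end Complex

lemma omega3_isPrimitiveRoot : IsPrimitiveRoot omega3 3 := by
  simpa [omega3] using Complex.isPrimitiveRoot_exp 3 (by norm_num)

lemma sum_omega3_zpow_neg_pow {n : ℕ} (hn : n.Coprime 3) :
    ∑ k : Fin 3, (omega3 ^ (-(k : ℤ))) ^ n = 0 := by
  calc ∑ k : Fin 3, (omega3 ^ (-(k : ℤ))) ^ n = ∑ k ∈ range 3, (omega3⁻¹ ^ n) ^ k := by
        rw [← Fin.sum_univ_eq_sum_range (fun k => (omega3⁻¹ ^ n) ^ k)]
        refine sum_congr rfl fun k _ => ?_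
        rw [zpow_neg, zpow_natCast, ← inv_pow, ← pow_mul, ← pow_mul, mul_comm]
    _ = 0 := (omega3_isPrimitiveRoot.inv.pow_of_coprime n hn).geom_sum_eq_zero (by norm_num)

lemma norm_omega3_zpow_mul (n : ℤ) (v : ℂ) : ‖omega3 ^ n * v‖ = ‖v‖ := by
  rw [norm_mul, norm_zpow, omega3_isPrimitiveRoot.norm'_eq_one (by norm_num), one_zpow, one_mul]

lemma omega3_zpow_mul_pow_three (n : ℤ) (v : ℂ) : (omega3 ^ n * v) ^ 3 = v ^ 3 := by
  have hunit : (omega3 ^ n) ^ 3 = 1 := by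
    rw [← zpow_natCast, ← zpow_mul, mul_comm, zpow_mul, zpow_natCast,
      omega3_isPrimitiveRoot.pow_eq_one, one_zpow]
  rw [mul_pow, hunit, one_mul]

noncomputable def omegaCoord (v : ℂ) (k : Fin 3) : ℝ := (omega3 ^ (-(k : ℤ)) * v).re

lemma muIJ_eq_sqrt_two_mul_sub (i j : Fin 3) (v : ℂ) :
    muIJ i j v = √2 * (omegaCoord v i - omegaCoord v j) := by
  rw [muIJ, sub_mul, Complex.sub_re]; rfl

lemma isChebyshevTriple_omegaCoord {v : ℂ} (hv : ‖v‖ = 1) :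
    IsChebyshevTriple (omegaCoord v) (v ^ 3).re where
  sum_eq_zero := by
    have := sum_omega3_zpow_neg_pow (n := 1) (by norm_num)
    simp only [pow_one] at this
    simp only [omegaCoord, ← Complex.re_sum, ← sum_mul, this, zero_mul, Complex.zero_re]
  sum_sq := by
    have hsq (k : Fin 3) :
        omegaCoord v k ^ 2 = (1 + ((omega3 ^ (-(k : ℤ))) ^ 2 * v ^ 2).re) / 2 := by
      rw [omegaCoord, ← mul_pow,
        ← Complex.two_mul_re_sq_of_norm_eq_one (norm_omega3_zpow_mul _ v ▸ hv)]
      ring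
    simp only [hsq, ← sum_div, sum_add_distrib, ← Complex.re_sum, ← sum_mul,
      sum_omega3_zpow_neg_pow (n := 2) (by norm_num)]
    norm_num
  chebyshev k := by
    rw [omegaCoord, ← Complex.re_pow_three_of_norm_eq_one (norm_omega3_zpow_mul _ v ▸ hv),
      omega3_zpow_mul_pow_three]

section UnitCircle

variable {v : ℂ} {M m : ℝ}

lemma exists_isGreatest_isLeast_omegaCoord (v : ℂ) :
    ∃ M m, IsGreatest (Set.range (omegaCoord v)) M ∧ IsLeast (Set.range (omegaCoord v)) m := by
  obtain ⟨i, -, hi⟩ := exists_max_image univ (omegaCoord v) univ_nonempty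
  obtain ⟨j, -, hj⟩ := exists_min_image univ (omegaCoord v) univ_nonempty
  exact ⟨_, _, ⟨⟨i, rfl⟩, by rintro _ ⟨k, rfl⟩; exact hi k (mem_univ k)⟩,
    ⟨⟨j, rfl⟩, by rintro _ ⟨k, rfl⟩; exact hj k (mem_univ k)⟩⟩

lemma muMax_eq_sqrt_two_mul_sub (hM : IsGreatest (Set.range (omegaCoord v)) M)
    (hm : IsLeast (Set.range (omegaCoord v)) m) : muMax v = √2 * (M - m) := by
  refine le_antisymm (sup'_le _ _ fun p _ => ?_) ?_
  · rw [muIJ_eq_sqrt_two_mul_sub]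
    gcongr
    exacts [hM.2 ⟨p.1, rfl⟩, hm.2 ⟨p.2, rfl⟩]
  · obtain ⟨⟨i, hi⟩, ⟨j, hj⟩⟩ := And.intro hM.1 hm.1
    have := le_sup' (fun p : Fin 3 × Fin 3 => muIJ p.1 p.2 v) (mem_univ (i, j))
    rwa [muIJ_eq_sqrt_two_mul_sub, hi, hj] at this

lemma muMax_eq_sqrt (hM : IsGreatest (Set.range (omegaCoord v)) M)
    (hm : IsLeast (Set.range (omegaCoord v)) m) : muMax v = √(2 * (M - m) ^ 2) := by
  obtain ⟨i, rfl⟩ := hM.1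
  rw [muMax_eq_sqrt_two_mul_sub hM hm, Real.sqrt_mul zero_le_two,
    Real.sqrt_sq (sub_nonneg.2 (hm.2 ⟨i, rfl⟩))]

lemma muIJ_eq_muMax_iff (hM : IsGreatest (Set.range (omegaCoord v)) M)
    (hm : IsLeast (Set.range (omegaCoord v)) m) (i j : Fin 3) :
    muIJ i j v = muMax v ↔ omegaCoord v i = M ∧ omegaCoord v j = m := by
  rw [muIJ_eq_sqrt_two_mul_sub, muMax_eq_sqrt_two_mul_sub hM hm, mul_right_inj' (by positivity),
    sub_eq_sub_iff_of_isGreatest_of_isLeast hM hm]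

lemma muMax_le_sqrt_six (hv : ‖v‖ = 1) : muMax v ≤ √6 := by
  obtain ⟨M, m, hM, hm⟩ := exists_isGreatest_isLeast_omegaCoord v
  rw [muMax_eq_sqrt hM hm]
  exact Real.sqrt_le_sqrt (by linarith [(isChebyshevTriple_omegaCoord hv).sub_sq_le_three hM hm])

lemma muMax_eq_sqrt_six_iff (hv : ‖v‖ = 1) :
    muMax v = √6 ↔ v ^ 3 = Complex.I ∨ v ^ 3 = -Complex.I := by
  obtain ⟨M, m, hM, hm⟩ := exists_isGreatest_isLeast_omegaCoord v
  rw [muMax_eq_sqrt hM hm, Real.sqrt_inj (by positivity) (by norm_num),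
    Complex.eq_I_or_eq_neg_I_iff_of_norm_eq_one (by simp [hv]),
    ← (isChebyshevTriple_omegaCoord hv).sub_sq_eq_three_iff hM hm]
  constructor <;> intro <;> linarith

lemma sqrt_nine_div_two : √(9 / 2) = 3 * √2 / 2 := by
  rw [show (9 : ℝ) / 2 = (3 / 2) ^ 2 * 2 by norm_num, Real.sqrt_mul (by positivity),
    Real.sqrt_sq (by norm_num)]
  ring

lemma three_mul_sqrt_two_div_two_le_muMax (hv : ‖v‖ = 1) : 3 * √2 / 2 ≤ muMax v := by
  obtain ⟨M, m, hM, hm⟩ := exists_isGreatest_isLeast_omegaCoord v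
  rw [muMax_eq_sqrt hM hm, ← sqrt_nine_div_two]
  exact Real.sqrt_le_sqrt
    (by linarith [(isChebyshevTriple_omegaCoord hv).nine_div_four_le_sub_sq hM hm])

lemma muMax_eq_three_mul_sqrt_two_div_two_iff (hv : ‖v‖ = 1) :
    muMax v = 3 * √2 / 2 ↔ v ^ 3 = 1 ∨ v ^ 3 = -1 := by
  obtain ⟨M, m, hM, hm⟩ := exists_isGreatest_isLeast_omegaCoord v
  have h := isChebyshevTriple_omegaCoord hv
  rw [muMax_eq_sqrt hM hm, ← sqrt_nine_div_two, Real.sqrt_inj (by positivity) (by norm_num),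
    Complex.eq_one_or_eq_neg_one_iff_of_norm_eq_one (by simp [hv]),
    ← Complex.re_sq_eq_one_iff_im_eq_zero (by simp [hv]),
    ← h.mul_eq_neg_half_iff_sq_eq_one hM hm]
  have := h.sub_sq_eq hM hm
  constructor <;> intro <;> linarith

lemma ncard_setOf_muIJ_eq_muMax (hv : ‖v‖ = 1) :
    {p : Fin 3 × Fin 3 | muIJ p.1 p.2 v = muMax v}.ncard =
      if (v ^ 3).im = 0 then 2 else 1 := by
  obtain ⟨M, m, hM, hm⟩ := exists_isGreatest_isLeast_omegaCoord v
  have h := isChebyshevTriple_omegaCoord hv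
  set S : Finset (Fin 3) := {i | omegaCoord v i = M}
  set T : Finset (Fin 3) := {j | omegaCoord v j = m}
  have hset : {p : Fin 3 × Fin 3 | muIJ p.1 p.2 v = muMax v} = ↑(S ×ˢ T) := by
    ext ⟨i, j⟩
    simp [S, T, muIJ_eq_muMax_iff hM hm]
  have hST : Disjoint S T := disjoint_filter.2 fun k _ hkM hkm =>
    (h.min_lt_max hM hm).ne' (hkM.symm.trans hkm)
  have hS : S.Nonempty := hM.1.imp fun i hi => mem_filter.2 ⟨mem_univ i, hi⟩
  have hT : T.Nonempty := hm.1.imp fun j hj => mem_filter.2 ⟨mem_univ j, hj⟩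
  have hU : S ∪ T = univ ↔ (v ^ 3).im = 0 := by
    rw [← filter_or, filter_eq_self, ← Complex.re_sq_eq_one_iff_im_eq_zero (by simp [hv]),
      ← h.mul_eq_neg_half_iff_sq_eq_one hM hm, h.mul_eq_neg_half_iff hM hm]
    simp
  rw [hset, Set.ncard_coe_finset, card_product]
  split_ifs with him
  · exact card_mul_card_of_union_eq_univ (Fintype.card_fin 3) hST hS hT (hU.2 him)
  · exact card_mul_card_of_union_ne_univ (Fintype.card_fin 3) hST hS hT (mt hU.1 him)

lemma muIJ_self (i : Fin 3) (v : ℂ) : muIJ i i v = 0 := by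
  simp [muIJ]

lemma setOf_ne_and_muIJ_eq_muMax (hv : ‖v‖ = 1) :
    {p : Fin 3 × Fin 3 | p.1 ≠ p.2 ∧ muIJ p.1 p.2 v = muMax v} =
      {p : Fin 3 × Fin 3 | muIJ p.1 p.2 v = muMax v} := by
  ext ⟨i, j⟩
  refine and_iff_right_of_imp fun hmax (hij : i = j) => ?_
  subst hij
  rw [muIJ_self] at hmax
  linarith [three_mul_sqrt_two_div_two_le_muMax hv, Real.sqrt_pos.2 (zero_lt_two' ℝ)]

end UnitCircle

/-- (a) the maximum of `μ` over the unit circle is `√6`, attained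
exactly at `v` with `v³ = ±i`; (b) the minimum is `3√2/2`, attained exactly at
`v` with `v³ = ±1`; (c) if `v³ ≠ ±1` there is a unique pair `(i,j)` with
`μ_{ij}(v) = μ(v)`; (d) if `v³ = ±1` there are exactly two pairs `(i,j)` with
`i ≠ j` and `μ_{ij}(v) = μ(v)`. -/
theorem stmt9 :
    (∀ v : ℂ, ‖v‖ = 1 → muMax v ≤ Real.sqrt 6) ∧
    (∀ v : ℂ, ‖v‖ = 1 →
      (muMax v = Real.sqrt 6 ↔ v ^ 3 = Complex.I ∨ v ^ 3 = -Complex.I)) ∧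
    (∀ v : ℂ, ‖v‖ = 1 → 3 * Real.sqrt 2 / 2 ≤ muMax v) ∧
    (∀ v : ℂ, ‖v‖ = 1 →
      (muMax v = 3 * Real.sqrt 2 / 2 ↔ v ^ 3 = 1 ∨ v ^ 3 = -1)) ∧
    (∀ v : ℂ, ‖v‖ = 1 → v ^ 3 ≠ 1 → v ^ 3 ≠ -1 →
      {p : Fin 3 × Fin 3 | muIJ p.1 p.2 v = muMax v}.ncard = 1) ∧
    (∀ v : ℂ, ‖v‖ = 1 → (v ^ 3 = 1 ∨ v ^ 3 = -1) →
      {p : Fin 3 × Fin 3 | p.1 ≠ p.2 ∧ muIJ p.1 p.2 v = muMax v}.ncard = 2) := by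
  refine ⟨fun v hv => muMax_le_sqrt_six hv, fun v hv => muMax_eq_sqrt_six_iff hv,
    fun v hv => three_mul_sqrt_two_div_two_le_muMax hv,
    fun v hv => muMax_eq_three_mul_sqrt_two_div_two_iff hv, fun v hv h1 h2 => ?_,
    fun v hv h => ?_⟩
  · have him : (v ^ 3).im ≠ 0 := fun him =>
      ((Complex.eq_one_or_eq_neg_one_iff_of_norm_eq_one (by simp [hv])).2 him).elim h1 h2
    rw [ncard_setOf_muIJ_eq_muMax hv, if_neg him]
  · rw [setOf_ne_and_muIJ_eq_muMax hv, ncard_setOf_muIJ_eq_muMax hv,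
      if_pos ((Complex.eq_one_or_eq_neg_one_iff_of_norm_eq_one (by simp [hv])).1 h)]
end

section
/- Let ι₀ : ℂ → ℝ³ be defined by ι₀(z) = (e^{√2 Re(z)}, e^{√2 Re(ω² z)}, e^{√2 Re(ω z)}) where ω = e^{2πi/3}. Then ι₀ is an injective immersion whose image is exactly the surface {(x₁, x₂, x₃) ∈ ℝ³ : x_i > 0, x₁x₂x₃ = 1}, and the composition δ₀ = ℙ ∘ ι₀ with the projectivization ℙ : ℝ³∖{0} → ℝP² is a diffeomorphism from ℂ onto the open triangle Δ = {[x₁ : x₂ : x₃] ∈ ℝP² : x_i > 0}. -/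
open scoped LinearAlgebra.Projectivization

/-- The Ţiţeica affine spherical immersion
`ι₀(z) = (e^{√2 Re z}, e^{√2 Re(ω²z)}, e^{√2 Re(ωz)})`. -/
noncomputable def iota0 (z : ℂ) : Fin 3 → ℝ :=
  ![Real.exp (Real.sqrt 2 * z.re),
    Real.exp (Real.sqrt 2 * (omega3 ^ 2 * z).re),
    Real.exp (Real.sqrt 2 * (omega3 * z).re)]

/-- The open triangle `Δ = {[x₁:x₂:x₃] ∈ ℝP² : xᵢ > 0}`. -/
def triangleDelta : Set (ℙ ℝ (Fin 3 → ℝ)) :=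
  {p | ∃ (x : Fin 3 → ℝ) (hx : x ≠ 0), (∀ i, 0 < x i) ∧
    p = Projectivization.mk ℝ x hx}

lemma omega3_re : omega3.re = -(1/2) := by
  have h1 : (2 * (Real.pi:ℂ) * Complex.I / 3).re = 0 := by simp
  have h2 : (2 * (Real.pi:ℂ) * Complex.I / 3).im = 2 * Real.pi / 3 := by simp
  rw [omega3, Complex.exp_re, h1, h2]
  have : 2 * Real.pi / 3 = Real.pi - Real.pi/3 := by ring
  rw [this, Real.cos_pi_sub, Real.cos_pi_div_three]
  simp

lemma omega3_im : omega3.im = Real.sqrt 3 / 2 := by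
  have h1 : (2 * (Real.pi:ℂ) * Complex.I / 3).re = 0 := by simp
  have h2 : (2 * (Real.pi:ℂ) * Complex.I / 3).im = 2 * Real.pi / 3 := by simp
  rw [omega3, Complex.exp_im, h1, h2]
  have : 2 * Real.pi / 3 = Real.pi - Real.pi/3 := by ring
  rw [this, Real.sin_pi_sub, Real.sin_pi_div_three]
  simp

lemma s3s3 : Real.sqrt 3 * Real.sqrt 3 = 3 := Real.mul_self_sqrt (by norm_num)

lemma re_omega_mul (z : ℂ) : (omega3 * z).re = -z.re/2 - Real.sqrt 3/2 * z.im := by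
  rw [Complex.mul_re, omega3_re, omega3_im]; ring

lemma re_omega_sq_mul (z : ℂ) : (omega3 ^ 2 * z).re = -z.re/2 + Real.sqrt 3/2 * z.im := by
  rw [pow_two, mul_assoc, Complex.mul_re, omega3_re, omega3_im, Complex.mul_re, Complex.mul_im,
    omega3_re, omega3_im]
  linear_combination (-(z.re)/4) * s3s3

lemma iota0_apply (z : ℂ) : iota0 z = ![Real.exp (Real.sqrt 2 * z.re),
    Real.exp (Real.sqrt 2 * (-z.re/2 + Real.sqrt 3/2 * z.im)),
    Real.exp (Real.sqrt 2 * (-z.re/2 - Real.sqrt 3/2 * z.im))] := by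
  rw [iota0, re_omega_mul, re_omega_sq_mul]

lemma s2_pos : (0:ℝ) < Real.sqrt 2 := Real.sqrt_pos.2 (by norm_num)
lemma s3_pos : (0:ℝ) < Real.sqrt 3 := Real.sqrt_pos.2 (by norm_num)
lemma s6_eq : Real.sqrt 6 = Real.sqrt 2 * Real.sqrt 3 := by
  rw [← Real.sqrt_mul (by norm_num : (0:ℝ) ≤ 2)]; norm_num

noncomputable def gmap (x : Fin 3 → ℝ) : ℂ :=
  (((Real.log (x 0) - (Real.log (x 0) + Real.log (x 1) + Real.log (x 2))/3)/Real.sqrt 2 : ℝ) : ℂ)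
  + (((Real.log (x 1) - Real.log (x 2))/Real.sqrt 6 : ℝ) : ℂ) * Complex.I

lemma gmap_re (x : Fin 3 → ℝ) : (gmap x).re =
    (Real.log (x 0) - (Real.log (x 0) + Real.log (x 1) + Real.log (x 2))/3)/Real.sqrt 2 := by
  simp [gmap]
lemma gmap_im (x : Fin 3 → ℝ) : (gmap x).im =
    (Real.log (x 1) - Real.log (x 2))/Real.sqrt 6 := by
  simp [gmap]

lemma iota0_pos (z : ℂ) (i : Fin 3) : 0 < iota0 z i := by
  fin_cases i <;> simp [iota0] <;> exact Real.exp_pos _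

lemma iota0_ne_zero (z : ℂ) : iota0 z ≠ 0 :=
  fun h => (iota0_pos z 0).ne' (congrFun h 0)

lemma iota0_prod (z : ℂ) : iota0 z 0 * iota0 z 1 * iota0 z 2 = 1 := by
  simp only [iota0_apply, Matrix.cons_val_zero, Matrix.cons_val_one, Matrix.head_cons]
  rw [show ((2:Fin 3) : Fin 3) = 2 from rfl]
  norm_num [← Real.exp_add, Real.exp_eq_one_iff, Matrix.cons_val_two, Matrix.tail_cons]
  ring

lemma gmap_iota0 (z : ℂ) : gmap (iota0 z) = z := by
  apply Complex.ext
  · rw [gmap_re]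
    simp only [iota0_apply, Matrix.cons_val_zero, Matrix.cons_val_one, Matrix.head_cons,
      Real.log_exp, Matrix.cons_val_two, Matrix.tail_cons]
    norm_num [Real.log_exp]
    field_simp
    ring
  · rw [gmap_im]
    simp only [iota0_apply, Matrix.cons_val_zero, Matrix.cons_val_one, Matrix.head_cons,
      Matrix.cons_val_two, Matrix.tail_cons]
    norm_num [Real.log_exp, s6_eq]
    field_simp
    ring

lemma iota0_c0 (z : ℂ) : iota0 z 0 = Real.exp (Real.sqrt 2 * z.re) := by
  simp [iota0_apply]
lemma iota0_c1 (z : ℂ) :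
    iota0 z 1 = Real.exp (Real.sqrt 2 * (-z.re/2 + Real.sqrt 3/2 * z.im)) := by
  simp [iota0_apply]
lemma iota0_c2 (z : ℂ) :
    iota0 z 2 = Real.exp (Real.sqrt 2 * (-z.re/2 - Real.sqrt 3/2 * z.im)) := by
  simp [iota0_apply]

lemma iota0_gmap (x : Fin 3 → ℝ) (hx : ∀ i, 0 < x i) :
    iota0 (gmap x) =
      Real.exp (-(Real.log (x 0) + Real.log (x 1) + Real.log (x 2))/3) • x := by
  have hre := gmap_re x
  have him := gmap_im x
  set a := Real.log (x 0) with ha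
  set b := Real.log (x 1) with hb
  set c := Real.log (x 2) with hc
  have e0 : Real.exp a = x 0 := Real.exp_log (hx 0)
  have e1 : Real.exp b = x 1 := Real.exp_log (hx 1)
  have e2 : Real.exp c = x 2 := Real.exp_log (hx 2)
  funext i
  fin_cases i
  · show iota0 (gmap x) 0 = _
    rw [iota0_c0, hre, Pi.smul_apply, smul_eq_mul,
      show Real.sqrt 2 * ((a - (a + b + c)/3)/Real.sqrt 2) = -(a+b+c)/3 + a by
        field_simp; ring,
      Real.exp_add, e0]
    rfl
  · show iota0 (gmap x) 1 = _
    rw [iota0_c1, hre, him, Pi.smul_apply, smul_eq_mul,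
      show Real.sqrt 2 * (-((a - (a + b + c)/3)/Real.sqrt 2)/2
          + Real.sqrt 3/2 * ((b - c)/Real.sqrt 6)) = -(a+b+c)/3 + b by
        have h2 := ne_of_gt s2_pos; have h3 := ne_of_gt s3_pos; rw [s6_eq]; field_simp; ring,
      Real.exp_add, e1]
    rfl
  · show iota0 (gmap x) 2 = _
    rw [iota0_c2, hre, him, Pi.smul_apply, smul_eq_mul,
      show Real.sqrt 2 * (-((a - (a + b + c)/3)/Real.sqrt 2)/2
          - Real.sqrt 3/2 * ((b - c)/Real.sqrt 6)) = -(a+b+c)/3 + c by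
        have h2 := ne_of_gt s2_pos; have h3 := ne_of_gt s3_pos; rw [s6_eq]; field_simp; ring,
      Real.exp_add, e2]
    rfl

lemma gmap_smul (x : Fin 3 → ℝ) (hx : ∀ i, 0 < x i) (c : ℝ) (hc : 0 < c) :
    gmap (c • x) = gmap x := by
  have h : ∀ i : Fin 3, Real.log ((c • x) i) = Real.log c + Real.log (x i) := by
    intro i
    rw [Pi.smul_apply, smul_eq_mul, Real.log_mul (ne_of_gt hc) (ne_of_gt (hx i))]
  apply Complex.ext
  · rw [gmap_re, gmap_re, h 0, h 1, h 2]; ring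
  · rw [gmap_im, gmap_im, h 1, h 2]; ring

lemma contDiff_iota0 : ContDiff ℝ (⊤ : ℕ∞) iota0 := by
  rw [contDiff_pi]
  intro i
  have h1 : ContDiff ℝ ((⊤ : ℕ∞) : WithTop ℕ∞) fun z : ℂ => Real.sqrt 2 * z.re :=
    contDiff_const.mul (Complex.reCLM.contDiff)
  have h2 : ContDiff ℝ ((⊤ : ℕ∞) : WithTop ℕ∞) fun z : ℂ => Real.sqrt 2 * (omega3 ^ 2 * z).re :=
    contDiff_const.mul (Complex.reCLM.contDiff.comp (contDiff_const.mul contDiff_id))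
  have h3 : ContDiff ℝ ((⊤ : ℕ∞) : WithTop ℕ∞) fun z : ℂ => Real.sqrt 2 * (omega3 * z).re :=
    contDiff_const.mul (Complex.reCLM.contDiff.comp (contDiff_const.mul contDiff_id))
  fin_cases i
  · exact Real.contDiff_exp.comp h1
  · exact Real.contDiff_exp.comp h2
  · exact Real.contDiff_exp.comp h3

lemma contDiffOn_gmap : ContDiffOn ℝ (⊤ : ℕ∞) gmap {x : Fin 3 → ℝ | ∀ i, 0 < x i} := by
  have hlog : ∀ i : Fin 3, ContDiffOn ℝ ((⊤ : ℕ∞) : WithTop ℕ∞)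
      (fun x : Fin 3 → ℝ => Real.log (x i)) {x | ∀ i, 0 < x i} := by
    intro i x hx
    exact ((Real.contDiffAt_log.2 (ne_of_gt (hx i))).comp x
      ((ContinuousLinearMap.proj i : (Fin 3 → ℝ) →L[ℝ] ℝ).contDiff.contDiffAt)).contDiffWithinAt
  have hA : ContDiffOn ℝ ((⊤ : ℕ∞) : WithTop ℕ∞) (fun x : Fin 3 → ℝ =>
      (Real.log (x 0) - (Real.log (x 0) + Real.log (x 1) + Real.log (x 2))/3)/Real.sqrt 2)
      {x | ∀ i, 0 < x i} :=
    (((hlog 0).sub ((((hlog 0).add (hlog 1)).add (hlog 2)).div_const _)).div_const _)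
  have hB : ContDiffOn ℝ ((⊤ : ℕ∞) : WithTop ℕ∞) (fun x : Fin 3 → ℝ =>
      (Real.log (x 1) - Real.log (x 2))/Real.sqrt 6) {x | ∀ i, 0 < x i} :=
    ((hlog 1).sub (hlog 2)).div_const _
  exact (Complex.ofRealCLM.contDiff.comp_contDiffOn hA).add
    ((Complex.ofRealCLM.contDiff.comp_contDiffOn hB).mul contDiffOn_const)


/-- `ι₀` is a smooth injective immersion with image the Ţiţeica
affine sphere `{x : xᵢ > 0, x₁x₂x₃ = 1}`, and the projectivization
`δ₀ = ℙ ∘ ι₀` is a diffeomorphism from `ℂ` onto the open triangle `Δ`: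
it is a smooth bijection onto `Δ` whose inverse is induced by a smooth
scale-invariant map on the positive cone. -/
theorem stmt10 :
    Function.Injective iota0 ∧
    ContDiff ℝ (⊤ : ℕ∞) iota0 ∧
    (∀ z : ℂ, Function.Injective (fderiv ℝ iota0 z)) ∧
    Set.range iota0 = {x : Fin 3 → ℝ | (∀ i, 0 < x i) ∧ x 0 * x 1 * x 2 = 1} ∧
    (∀ δ₀ : ℂ → ℙ ℝ (Fin 3 → ℝ),
      (∀ (z : ℂ) (hz : iota0 z ≠ 0), δ₀ z = Projectivization.mk ℝ (iota0 z) hz) →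
      Function.Injective δ₀ ∧ Set.range δ₀ = triangleDelta ∧
      ∃ g : (Fin 3 → ℝ) → ℂ,
        ContDiffOn ℝ (⊤ : ℕ∞) g {x : Fin 3 → ℝ | ∀ i, 0 < x i} ∧
        (∀ x : Fin 3 → ℝ, (∀ i, 0 < x i) → ∀ c : ℝ, 0 < c → g (c • x) = g x) ∧
        (∀ z : ℂ, g (iota0 z) = z)) := by
  simp only [triangleDelta]
  have hginv : ∀ z, gmap (iota0 z) = z := gmap_iota0
  have hinj : Function.Injective iota0 := Function.LeftInverse.injective hginv
  have hOpen : IsOpen {x : Fin 3 → ℝ | ∀ i, 0 < x i} := by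
    have h : {x : Fin 3 → ℝ | ∀ i, 0 < x i} = ⋂ i, (fun x : Fin 3 → ℝ => x i) ⁻¹' Set.Ioi 0 := by
      ext x; simp [Set.mem_iInter]
    rw [h]
    exact isOpen_iInter_of_finite fun i => (continuous_apply i).isOpen_preimage _ isOpen_Ioi
  refine ⟨hinj, contDiff_iota0, ?_, ?_, ?_⟩
  · intro z
    have hd1 : HasFDerivAt iota0 (fderiv ℝ iota0 z) z :=
      (contDiff_iota0.differentiable (by simp)).differentiableAt.hasFDerivAt
    have hd2 : DifferentiableAt ℝ gmap (iota0 z) :=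
      (contDiffOn_gmap.differentiableOn (by simp)).differentiableAt
        (hOpen.mem_nhds (fun i => iota0_pos z i))
    have hcomp := hd2.hasFDerivAt.comp z hd1
    have heq : gmap ∘ iota0 = id := funext hginv
    rw [heq] at hcomp
    have hid : (fderiv ℝ gmap (iota0 z)).comp (fderiv ℝ iota0 z) = ContinuousLinearMap.id ℝ ℂ :=
      hcomp.unique (hasFDerivAt_id z)
    intro v w hvw
    have hv := congrArg (fun L : ℂ →L[ℝ] ℂ => L v) hid
    have hw := congrArg (fun L : ℂ →L[ℝ] ℂ => L w) hid
    simp only [ContinuousLinearMap.comp_apply, ContinuousLinearMap.id_apply] at hv hw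
    rw [← hv, ← hw, hvw]
  · ext x
    constructor
    · rintro ⟨z, rfl⟩
      exact ⟨iota0_pos z, iota0_prod z⟩
    · rintro ⟨hpos, hprod⟩
      refine ⟨gmap x, ?_⟩
      rw [iota0_gmap x hpos]
      have h0 : Real.log (x 0) + Real.log (x 1) + Real.log (x 2) = 0 := by
        rw [← Real.log_mul (ne_of_gt (hpos 0)) (ne_of_gt (hpos 1)),
          ← Real.log_mul (ne_of_gt (mul_pos (hpos 0) (hpos 1))) (ne_of_gt (hpos 2)), hprod, Real.log_one]
      rw [h0]
      norm_num
  · intro δ₀ hδ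
    have hδ' : ∀ z, δ₀ z = Projectivization.mk ℝ (iota0 z) (iota0_ne_zero z) :=
      fun z => hδ z _
    refine ⟨?_, ?_, gmap, contDiffOn_gmap, gmap_smul, hginv⟩
    · intro z z' h
      rw [hδ' z, hδ' z', Projectivization.mk_eq_mk_iff] at h
      obtain ⟨u, hu⟩ := h
      have hu' : (u : ℝ) • iota0 z' = iota0 z := hu
      have hupos : (0:ℝ) < (u : ℝ) := by
        have := congrFun hu' 0
        rw [Pi.smul_apply, smul_eq_mul] at this
        nlinarith [iota0_pos z 0, iota0_pos z' 0]
      have := gmap_smul (iota0 z') (iota0_pos z') (u : ℝ) hupos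
      rw [hu', hginv, hginv] at this
      exact this
    · ext p
      constructor
      · rintro ⟨z, rfl⟩
        rw [hδ']
        exact ⟨iota0 z, iota0_ne_zero z, iota0_pos z, rfl⟩
      · rintro ⟨x, hx, hpos, rfl⟩
        refine ⟨gmap x, ?_⟩
        rw [hδ', Projectivization.mk_eq_mk_iff']
        exact ⟨Real.exp (-(Real.log (x 0) + Real.log (x 1) + Real.log (x 2))/3),
          (iota0_gmap x hpos).symm⟩
end

section
/- Let ℍ̄ = {z ∈ ℂ : Im z ≥ 0} be the closed upper half-plane and f : ℍ̄ → ℝP² a map such that the restrictions f|_{ℍ} (to the open half-plane) and f|_{ℝ} are each continuous and injective, and such that for every sequence (z_n) in the open half-plane ℍ converging to a point x ∈ ℝ, one has f(z_n) → f(x). Then f is continuous and injective on all of ℍ̄. -/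
open scoped LinearAlgebra.Projectivization

/-- The quotient topology on the real projective plane
`ℝP² = ℙ ℝ (Fin 3 → ℝ)` (as a quotient of `(Fin 3 → ℝ) ∖ {0}`). -/
noncomputable instance : TopologicalSpace (ℙ ℝ (Fin 3 → ℝ)) :=
  inferInstanceAs (TopologicalSpace
    (Quotient (projectivizationSetoid ℝ (Fin 3 → ℝ))))

/-!
Continuity at a real point `x` is the given sequential continuity within `ℍ` together with
continuity along `ℝ`. For injectivity it remains to rule out `f z = f x` with `z ∈ ℍ` and
`x ∈ ℝ`. Since `ℝP²` is locally homeomorphic to the plane, invariance of domain makes `f` map a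
closed disc `D ∋ z` inside `ℍ` onto a neighbourhood of `f z`. As `f w → f x = f z` when `w → x`
within `ℍ`, injectivity forces these `w` into `D`, so `x ∈ D ⊆ ℍ`, which is absurd.

Invariance of domain in the plane is proved with winding numbers, expressed through periodic
continuous logarithms: if `g` is injective on a closed disc about `z₀` and misses a value `q` close
to `g z₀`, the loop `θ ↦ g (z₀ + r e^{iθ}) - q` is null-homotopic, yet homotopic to
`θ ↦ g (z₀ + r e^{iθ}) - g (z₀ - r e^{iθ})`, which is odd and so has no periodic logarithm.
-/

open Complex Set Filter Topology Metric Function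
open scoped Real

theorem exists_continuous_log {A : Type*} [TopologicalSpace A] [SimplyConnectedSpace A]
    [LocallyPathConnectedSpace A] {f : A → ℂ} (hf : Continuous f) (hf₀ : ∀ a, f a ≠ 0) :
    ∃ L : A → ℂ, Continuous L ∧ ∀ a, exp (L a) = f a := by
  obtain ⟨a₀⟩ : Nonempty A := inferInstance
  obtain ⟨L, ⟨-, hL⟩, -⟩ := isCoveringMapOn_exp.existsUnique_continuousMap_lifts ⟨f, hf⟩
    (exp_log (hf₀ a₀)) (fun a => hf₀ a)
  exact ⟨L, L.continuous, congrFun hL⟩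

theorem apply_eq_of_exp_apply_eq {A : Type*} [TopologicalSpace A] [PreconnectedSpace A]
    {L : A → ℂ} (hL : Continuous L) (h : ∀ a b, exp (L a) = exp (L b)) (a b : A) :
    L a = L b :=
  isCoveringMap_exp.const_of_comp hL (fun a b => Subtype.ext (h a b)) a b

-- The `T`-periodic loop `γ` has winding number zero about `0`.
def HasPeriodicLog (γ : ℝ → ℂ) (T : ℝ) : Prop :=
  ∃ L : ℝ → ℂ, Continuous L ∧ Periodic L T ∧ ∀ t, exp (L t) = γ t

theorem hasPeriodicLog_const {c : ℂ} (hc : c ≠ 0) (T : ℝ) : HasPeriodicLog (fun _ => c) T :=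
  ⟨fun _ => log c, continuous_const, fun _ => rfl, fun _ => exp_log hc⟩

theorem HasPeriodicLog.of_norm_sub_lt {γ γ' : ℝ → ℂ} {T : ℝ} (h : HasPeriodicLog γ T)
    (hγ' : Continuous γ') (hper : Periodic γ' T) (hclose : ∀ t, ‖γ t - γ' t‖ < ‖γ' t‖) :
    HasPeriodicLog γ' T := by
  obtain ⟨L, hLc, hLper, hL⟩ := h
  have hγ'₀ : ∀ t, γ' t ≠ 0 := fun t h0 => (norm_nonneg _).not_gt (by simpa [h0] using hclose t)
  have hγ : Continuous γ := (continuous_exp.comp hLc).congr hL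
  -- `γ / γ'` stays in the disc of radius `1` about `1`, where `log` is continuous
  have hslit : ∀ t, γ t / γ' t ∈ slitPlane := fun t => by
    have := mem_slitPlane_of_norm_lt_one (z := (γ t - γ' t) / γ' t) (by
      rw [norm_div]; exact (div_lt_one (norm_pos_iff.mpr (hγ'₀ t))).mpr (hclose t))
    rwa [add_div', one_mul, add_sub_cancel] at this
    exact hγ'₀ t
  refine ⟨fun t => L t - log (γ t / γ' t), ?_, fun t => ?_, fun t => ?_⟩
  · exact hLc.sub (Continuous.clog (hγ.div hγ' hγ'₀) hslit)
  · simp only [hLper t, ← hL, hper t]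
  · rw [exp_sub, exp_log (slitPlane_ne_zero (hslit t)), hL, div_div_cancel₀ ?_]
    rw [← hL]; exact exp_ne_zero _

theorem HasPeriodicLog.of_homotopy {Φ : ℝ → ℝ → ℂ} {T : ℝ}
    (hΦ : ContinuousOn (uncurry Φ) (Icc 0 1 ×ˢ univ)) (hΦ₀ : ∀ s ∈ Icc (0 : ℝ) 1, ∀ t, Φ s t ≠ 0)
    (hper : ∀ s ∈ Icc (0 : ℝ) 1, Periodic (Φ s) T) (h : HasPeriodicLog (Φ 0) T) :
    HasPeriodicLog (Φ 1) T := by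
  obtain ⟨ℓ, hℓc, hℓper, hℓ⟩ := h
  set σ : ℝ → ℝ := fun s => projIcc 0 1 zero_le_one s
  have hσ : ∀ s, σ s ∈ Icc (0 : ℝ) 1 := fun s => (projIcc 0 1 zero_le_one s).2
  have hσc : Continuous σ := continuous_subtype_val.comp continuous_projIcc
  obtain ⟨Λ, hΛc, hΛ⟩ := exists_continuous_log (f := fun p : ℝ × ℝ => Φ (σ p.1) p.2)
    (hΦ.comp_continuous (hσc.prodMap continuous_id) fun p => ⟨hσ p.1, mem_univ _⟩)
    (fun p => hΦ₀ _ (hσ p.1) p.2)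
  have hσ0 : σ 0 = 0 := congrArg Subtype.val (projIcc_left zero_le_one)
  have hσ1 : σ 1 = 1 := congrArg Subtype.val (projIcc_right zero_le_one)
  -- the jump of `Λ` over one period lies in `2πiℤ` and so is constant
  set D : ℝ × ℝ → ℂ := fun p => Λ (p.1, p.2 + T) - Λ p
  have hD : ∀ p q, D p = D q := by
    refine apply_eq_of_exp_apply_eq (by fun_prop) fun p q => ?_
    simp only [D, exp_sub, hΛ]
    rw [hper _ (hσ _), hper _ (hσ _), div_self (hΦ₀ _ (hσ _) _), div_self (hΦ₀ _ (hσ _) _)]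
  have hD0 : ∀ t, D (0, t) = 0 := fun t => by
    have hc := apply_eq_of_exp_apply_eq (L := fun t => ℓ t - Λ (0, t)) (by fun_prop)
      (fun t t' => by simp only [exp_sub, hℓ, hΛ, hσ0, div_self (hΦ₀ 0 (by simp) _)]) (t + T) t
    simp only [hℓper t] at hc
    simp only [D]
    linear_combination -hc
  refine ⟨fun t => Λ (1, t), by fun_prop, fun t => ?_, fun t => by rw [hΛ, hσ1]⟩
  exact sub_eq_zero.mp ((hD (1, t) (0, t)).trans (hD0 t))

theorem Function.Antiperiodic.not_hasPeriodicLog {γ : ℝ → ℂ} {c : ℝ} (hγ : Antiperiodic γ c) :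
    ¬HasPeriodicLog γ (2 * c) := by
  rintro ⟨L, hLc, hLper, hL⟩
  -- the half-period jump `M` of `L` is a logarithm of `-1`, hence constant, while `2 M = 0`
  set M : ℝ → ℂ := fun t => L (t + c) - L t
  have hM : ∀ t, exp (M t) = -1 := fun t => by
    rw [exp_sub, hL, hL, hγ t, neg_div, div_self]
    rw [← hL]; exact exp_ne_zero _
  have hMc : ∀ t, M t = M 0 :=
    fun t => apply_eq_of_exp_apply_eq (by fun_prop) (fun t t' => by rw [hM, hM]) t 0
  have h2M : M c + M 0 = 0 := by
    have h : L (c + c) = L 0 := by simpa [two_mul] using hLper 0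
    simp only [M, zero_add]
    linear_combination h
  have hM0 : M 0 = 0 := by linear_combination (h2M - hMc c) / 2
  exact absurd (hM 0) (by rw [hM0, exp_zero]; norm_num)

theorem circleMap_add_pi (c : ℂ) (R θ : ℝ) : circleMap c R (θ + π) = circleMap c (-R) θ := by
  simp [circleMap, add_mul, Complex.exp_add]

theorem circleMap_mem_closedBall_of_abs_le {c : ℂ} {R r : ℝ} (h : |R| ≤ r) (θ : ℝ) :
    circleMap c R θ ∈ closedBall c r := by
  rwa [mem_closedBall, Complex.dist_eq, circleMap_sub_center, norm_circleMap_zero]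

theorem circleMap_injective_radius (c : ℂ) (θ : ℝ) : Injective fun R => circleMap c R θ :=
  fun _ _ h => ofReal_injective (mul_right_cancel₀ (exp_ne_zero _) (add_left_cancel h))

@[fun_prop]
theorem Continuous.circleMap {X : Type*} [TopologicalSpace X] (c : ℂ) {R θ : X → ℝ}
    (hR : Continuous R) (hθ : Continuous θ) : Continuous fun x => circleMap c (R x) (θ x) := by
  unfold _root_.circleMap; fun_prop

section InvarianceOfDomain

variable {g : ℂ → ℂ} {z₀ : ℂ} {r : ℝ}

theorem hasPeriodicLog_of_notMem_image (hr : 0 ≤ r) (hg : ContinuousOn g (closedBall z₀ r))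
    {q : ℂ} (hq : q ∉ g '' closedBall z₀ r) :
    HasPeriodicLog (fun θ => g (circleMap z₀ r θ) - q) (2 * π) := by
  have hmem : ∀ s ∈ Icc (0 : ℝ) 1, ∀ θ, circleMap z₀ (s * r) θ ∈ closedBall z₀ r :=
    fun s hs θ => circleMap_mem_closedBall_of_abs_le (by
      rw [abs_of_nonneg (mul_nonneg hs.1 hr)]; exact mul_le_of_le_one_left hr hs.2) θ
  have := HasPeriodicLog.of_homotopy (Φ := fun s θ => g (circleMap z₀ (s * r) θ) - q)
    ((hg.comp (by fun_prop : Continuous fun p : ℝ × ℝ => circleMap z₀ (p.1 * r) p.2).continuousOn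
      fun p hp => hmem p.1 hp.1 p.2).sub continuousOn_const)
    (fun s hs θ => sub_ne_zero.mpr fun h => hq ⟨_, hmem s hs θ, h⟩)
    (fun s _ => (periodic_circleMap z₀ (s * r)).comp fun w => g w - q)
    (by simpa [circleMap_zero_radius] using
      hasPeriodicLog_const (sub_ne_zero.mpr fun h => hq ⟨z₀, mem_closedBall_self hr, h⟩) (2 * π))
  simpa only [one_mul] using this

theorem not_hasPeriodicLog_sub_apply_center (hr : 0 < r) (hg : ContinuousOn g (closedBall z₀ r))
    (hinj : InjOn g (closedBall z₀ r)) :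
    ¬HasPeriodicLog (fun θ => g (circleMap z₀ r θ) - g z₀) (2 * π) := by
  have hmem : ∀ s ∈ Icc (0 : ℝ) 1, ∀ θ, circleMap z₀ (-(s * r)) θ ∈ closedBall z₀ r :=
    fun s hs θ => circleMap_mem_closedBall_of_abs_le (by
      rw [abs_neg, abs_of_nonneg (mul_nonneg hs.1 hr.le)]; exact mul_le_of_le_one_left hr.le hs.2) θ
  have hout : ∀ θ, circleMap z₀ r θ ∈ closedBall z₀ r := circleMap_mem_closedBall z₀ hr.le
  -- shrink the antipodal point to the centre; injectivity keeps the difference nonzero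
  intro h
  have := HasPeriodicLog.of_homotopy (T := 2 * π)
    (Φ := fun s θ => g (circleMap z₀ r θ) - g (circleMap z₀ (-(s * r)) θ))
    ((hg.comp_continuous (by fun_prop : Continuous fun p : ℝ × ℝ => circleMap z₀ r p.2)
        fun p => hout p.2).continuousOn.sub
      (hg.comp
        (by fun_prop : Continuous fun p : ℝ × ℝ => circleMap z₀ (-(p.1 * r)) p.2).continuousOn
        fun p hp => hmem p.1 hp.1 p.2))
    (fun s hs θ => sub_ne_zero.mpr fun h => by
      have := circleMap_injective_radius z₀ θ (hinj (hout θ) (hmem s hs θ) h)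
      nlinarith [hs.1])
    (fun s _ θ => by simp only [periodic_circleMap z₀ r θ, periodic_circleMap z₀ (-(s * r)) θ])
    (by simpa [circleMap_zero_radius] using h)
  refine Antiperiodic.not_hasPeriodicLog (c := π) (fun θ => ?_) (by simpa only [one_mul] using this)
  simp only [circleMap_add_pi, neg_neg]
  ring

theorem image_closedBall_mem_nhds (hr : 0 < r) (hg : ContinuousOn g (closedBall z₀ r))
    (hinj : InjOn g (closedBall z₀ r)) : g '' closedBall z₀ r ∈ 𝓝 (g z₀) := by
  obtain ⟨w, hw, hmin⟩ := (isCompact_sphere z₀ r).exists_isMinOn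
    (NormedSpace.sphere_nonempty.mpr hr.le)
    ((hg.mono sphere_subset_closedBall).sub continuousOn_const).norm
  have hm : 0 < ‖g w - g z₀‖ := norm_pos_iff.mpr <| sub_ne_zero.mpr fun h =>
    ne_of_mem_sphere hw hr.ne' (hinj (sphere_subset_closedBall hw) (mem_closedBall_self hr.le) h)
  refine mem_of_superset (ball_mem_nhds _ hm) fun q hq => ?_
  by_contra hq'
  refine not_hasPeriodicLog_sub_apply_center hr hg hinj
    ((hasPeriodicLog_of_notMem_image hr.le hg hq').of_norm_sub_lt ?_
      ((periodic_circleMap z₀ r).comp fun w => g w - g z₀) fun θ => ?_)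
  · exact (hg.comp_continuous (continuous_circleMap z₀ r)
      (circleMap_mem_closedBall z₀ hr.le)).sub continuous_const
  · calc ‖g (circleMap z₀ r θ) - q - (g (circleMap z₀ r θ) - g z₀)‖ = dist q (g z₀) := by
          rw [dist_comm, Complex.dist_eq]; congr 1; ring
      _ < ‖g w - g z₀‖ := hq
      _ ≤ ‖g (circleMap z₀ r θ) - g z₀‖ := hmin (circleMap_mem_sphere z₀ hr.le θ)

end InvarianceOfDomain

def LocallyInjectsIntoPlane (X : Type*) [TopologicalSpace X] : Prop :=
  ∀ x : X, ∃ U ∈ 𝓝 x, ∃ φ : X → ℂ, ContinuousOn φ U ∧ InjOn φ U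

section LocallyPlanar

variable {X : Type*} [TopologicalSpace X] {f : ℂ → X}

theorem LocallyInjectsIntoPlane.image_mem_nhds (hX : LocallyInjectsIntoPlane X) {s : Set ℂ}
    {z : ℂ} (hs : s ∈ 𝓝 z) (hf : ContinuousOn f s) (hinj : InjOn f s) : f '' s ∈ 𝓝 (f z) := by
  obtain ⟨U, hU, φ, hφ, hφinj⟩ := hX (f z)
  obtain ⟨r, hr, hball⟩ := nhds_basis_closedBall.mem_iff.mp
    (inter_mem hs ((hf.continuousAt hs).preimage_mem_nhds hU))
  have hg : ContinuousOn (φ ∘ f) (closedBall z r) :=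
    hφ.comp (hf.mono fun w hw => (hball hw).1) fun w hw => (hball hw).2
  have hginj : InjOn (φ ∘ f) (closedBall z r) := fun a ha b hb h =>
    hinj (hball ha).1 (hball hb).1 (hφinj (hball ha).2 (hball hb).2 h)
  refine mem_of_superset (inter_mem hU ((hφ.continuousAt hU).preimage_mem_nhds
    (image_closedBall_mem_nhds hr hg hginj))) ?_
  rintro P ⟨hPU, w, hw, hφw⟩
  exact ⟨w, (hball hw).1, hφinj (hball hw).2 hPU hφw⟩

theorem LocallyInjectsIntoPlane.apply_ne_apply_of_mem_frontier (hX : LocallyInjectsIntoPlane X)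
    {U : Set ℂ} (hU : IsOpen U) (hf : ContinuousOn f U) (hinj : InjOn f U) {x z : ℂ}
    (hx : x ∈ frontier U) (hfx : ContinuousWithinAt f U x) (hz : z ∈ U) : f z ≠ f x := by
  intro hfzx
  obtain ⟨r, hr, hball⟩ := nhds_basis_closedBall.mem_iff.mp (hU.mem_nhds hz)
  have himage : f '' closedBall z r ∈ 𝓝 (f x) := hfzx ▸
    hX.image_mem_nhds (closedBall_mem_nhds z hr) (hf.mono hball) (hinj.mono hball)
  -- by injectivity, the points of `U` near `x` lie in the ball itself
  have hnear : closedBall z r ∈ 𝓝[U] x := by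
    filter_upwards [hfx himage, self_mem_nhdsWithin] with w ⟨v, hv, hfv⟩ hw
    exact hinj (hball hv) hw hfv ▸ hv
  rw [hU.frontier_eq] at hx
  have : (𝓝[U] x).NeBot := mem_closure_iff_nhdsWithin_neBot.mp hx.1
  have : x ∈ closure (closedBall z r) :=
    mem_closure_iff_frequently.mpr ((Eventually.frequently hnear).filter_mono nhdsWithin_le_nhds)
  rw [isClosed_closedBall.closure_eq] at this
  exact hx.2 (hball this)

end LocallyPlanar

theorem Topology.IsQuotientMap.continuousOn_of_comp {Y X Z : Type*} [TopologicalSpace Y]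
    [TopologicalSpace X] [TopologicalSpace Z] {p : Y → X} (hp : IsQuotientMap p) {U : Set X}
    (hU : IsOpen U) {φ : X → Z} (h : ContinuousOn (φ ∘ p) (p ⁻¹' U)) : ContinuousOn φ U := by
  rw [continuousOn_iff_continuous_domRestrict] at h ⊢
  exact (hp.restrictPreimage_isOpen hU).continuous_iff.mpr h

namespace Projectivization

theorem rep_apply_ne_zero_iff {ι : Type*} {v : ι → ℝ} (hv : v ≠ 0) (i : ι) :
    (mk ℝ v hv).rep i ≠ 0 ↔ v i ≠ 0 := by
  obtain ⟨a, ha⟩ := exists_smul_eq_mk_rep ℝ v hv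
  simp [← ha, Units.smul_def, a.ne_zero]

noncomputable def affineChart (i : Fin 3) : ℙ ℝ (Fin 3 → ℝ) → ℂ :=
  Projectivization.lift (fun v => ⟨v.1 (i + 1) / v.1 i, v.1 (i + 2) / v.1 i⟩) <| by
    rintro ⟨-, ha⟩ ⟨b, -⟩ t rfl
    have ht : t ≠ 0 := by rintro rfl; simp at ha
    simp only [Pi.smul_apply, smul_eq_mul, mul_div_mul_left _ _ ht]

theorem isQuotientMap_mk' : IsQuotientMap (mk' ℝ : {v : Fin 3 → ℝ // v ≠ 0} → ℙ ℝ (Fin 3 → ℝ)) :=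
  isQuotientMap_quotient_mk'

theorem mk'_preimage_setOf_rep_ne_zero (i : Fin 3) :
    mk' ℝ ⁻¹' {P : ℙ ℝ (Fin 3 → ℝ) | P.rep i ≠ 0} = {v | v.1 i ≠ 0} :=
  ext fun v => rep_apply_ne_zero_iff v.2 i

theorem isOpen_setOf_rep_ne_zero (i : Fin 3) : IsOpen {P : ℙ ℝ (Fin 3 → ℝ) | P.rep i ≠ 0} := by
  rw [← isQuotientMap_mk'.isOpen_preimage, mk'_preimage_setOf_rep_ne_zero]
  exact isOpen_ne_fun ((continuous_apply i).comp continuous_subtype_val) continuous_const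

theorem continuousOn_affineChart (i : Fin 3) :
    ContinuousOn (affineChart i) {P | P.rep i ≠ 0} := by
  refine isQuotientMap_mk'.continuousOn_of_comp (isOpen_setOf_rep_ne_zero i) ?_
  rw [mk'_preimage_setOf_rep_ne_zero]
  have hc : ∀ j, Continuous fun v : {v : Fin 3 → ℝ // v ≠ 0} => v.1 j :=
    fun j => (continuous_apply j).comp continuous_subtype_val
  have hdiv : ∀ j, ContinuousOn (fun v : {v : Fin 3 → ℝ // v ≠ 0} => v.1 j / v.1 i)
      {v | v.1 i ≠ 0} :=
    fun j => (hc j).continuousOn.div (hc i).continuousOn fun _ hv => hv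
  exact (equivRealProdCLM.symm.continuous.comp_continuousOn ((hdiv (i + 1)).prodMk (hdiv (i + 2))))

theorem injOn_affineChart (i : Fin 3) : InjOn (affineChart i) {P | P.rep i ≠ 0} := by
  intro P hP Q hQ h
  induction P with | h v hv => induction Q with | h w hw =>
  replace hP := (rep_apply_ne_zero_iff hv i).mp hP
  replace hQ := (rep_apply_ne_zero_iff hw i).mp hQ
  simp only [affineChart, Projectivization.lift_mk, Complex.ext_iff] at h
  obtain ⟨h1, h2⟩ := h
  refine (mk_eq_mk_iff' ℝ v w hv hw).mpr ⟨v i / w i, funext fun j => ?_⟩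
  have hj : ∀ i j : Fin 3, j = i ∨ j = i + 1 ∨ j = i + 2 := by decide
  rw [Pi.smul_apply, smul_eq_mul]
  rcases hj i j with rfl | rfl | rfl <;> field_simp at h1 h2 ⊢ <;> linarith

theorem locallyInjectsIntoPlane : LocallyInjectsIntoPlane (ℙ ℝ (Fin 3 → ℝ)) := fun P => by
  obtain ⟨i, hi⟩ := Function.ne_iff.mp P.rep_nonzero
  exact ⟨_, (isOpen_setOf_rep_ne_zero i).mem_nhds hi, affineChart i, continuousOn_affineChart i,
    injOn_affineChart i⟩

end Projectivization

theorem continuousWithinAt_of_seq_tendsto {X Y : Type*} [TopologicalSpace X]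
    [FirstCountableTopology X] [TopologicalSpace Y] {f : X → Y} {s : Set X} {x : X}
    (h : ∀ u : ℕ → X, (∀ n, u n ∈ s) → Tendsto u atTop (𝓝 x) → Tendsto (f ∘ u) atTop (𝓝 (f x))) :
    ContinuousWithinAt f s x := by
  refine tendsto_of_seq_tendsto fun u hu => ?_
  obtain ⟨hux, hus⟩ := tendsto_nhdsWithin_iff.mp hu
  obtain ⟨N, hN⟩ := eventually_atTop.mp hus
  exact (tendsto_add_atTop_iff_nat N).mp <| h (fun n => u (n + N))
    (fun n => hN _ (Nat.le_add_left N n)) (hux.comp (tendsto_add_atTop_nat N))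

/-- let `f : ℍ̄ → ℝP²` be such that the restrictions to the open
upper half-plane `ℍ = {Im z > 0}` and to `ℝ = {Im z = 0}` are continuous and
injective, and such that `f(zₙ) → f(x)` whenever `zₙ ∈ ℍ` converges to `x ∈ ℝ`.
Then `f` is continuous and injective on `ℍ̄ = {Im z ≥ 0}`. -/
theorem stmt13 (f : ℂ → ℙ ℝ (Fin 3 → ℝ))
    (hcH : ContinuousOn f {z : ℂ | 0 < z.im})
    (hiH : Set.InjOn f {z : ℂ | 0 < z.im})
    (hcR : ContinuousOn f {z : ℂ | z.im = 0})
    (hiR : Set.InjOn f {z : ℂ | z.im = 0})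
    (hseq : ∀ (z : ℕ → ℂ) (x : ℂ), (∀ n, 0 < (z n).im) → x.im = 0 →
      Filter.Tendsto z Filter.atTop (nhds x) →
      Filter.Tendsto (fun n => f (z n)) Filter.atTop (nhds (f x))) :
    ContinuousOn f {z : ℂ | 0 ≤ z.im} ∧ Set.InjOn f {z : ℂ | 0 ≤ z.im} := by
  have hH : IsOpen {z : ℂ | 0 < z.im} := isOpen_lt continuous_const continuous_im
  have hbdry : ∀ x : ℂ, x.im = 0 → ContinuousWithinAt f {z : ℂ | 0 < z.im} x := fun x hx =>
    continuousWithinAt_of_seq_tendsto fun u hu hlim => hseq u x hu hx hlim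
  have hsplit : {z : ℂ | 0 ≤ z.im} = {z : ℂ | 0 < z.im} ∪ {z | z.im = 0} := by
    ext z; simp [le_iff_lt_or_eq, eq_comm]
  rw [hsplit]
  refine ⟨fun z hz => ?_, (injOn_union ?_).mpr ⟨hiH, hiR, fun z hz x hx => ?_⟩⟩
  · rcases hz with hz | hz
    · exact (hcH.continuousAt (hH.mem_nhds hz)).continuousWithinAt
    · exact (hbdry z hz).union (hcR z hz)
  · exact disjoint_left.mpr fun z hpos hzero => hpos.ne' hzero
  · exact Projectivization.locallyInjectsIntoPlane.apply_ne_apply_of_mem_frontier hH hcH hiH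
      (by rwa [frontier_setOfPred_lt_im]) (hbdry x hx) hz
end

section
/- Let k ≥ 1 be an integer and let u be a C² function on ℂ satisfying Δu = 2(e^u − e^{(1−k)u}) and u ≥ 0 everywhere. Then u ≡ 0. -/
/-!
Comparison with an explicit barrier. Since `u ≥ 0` and `k ≥ 1`, `u` is a subsolution of
`Δu = 2(e^u - 1)`. For `ε > 0` and `S = 4 / (e^ε - 1)`, the function
`v = ε + 2 log (S / (S - |z|²))` on the disc `|z|² < S` (so that `e^v |dz|²` is a constant multiple
of the Poincaré metric of the disc) satisfies `Δv = 8S / (S - |z|²)² ≤ 2(e^v - 1)` and blows up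
at the boundary. Hence if `u(0) > v(0) = ε`, then `u - v` has a positive interior maximum, where
`2(e^u - 1) ≤ Δu ≤ Δv ≤ 2(e^v - 1)` forces `u ≤ v`, a contradiction. Translating and letting
`ε → 0` gives `u ≤ 0`.
-/

open Topology Metric

/-- The Euclidean Laplacian of `f : ℂ → ℝ` at `z`, computed as the sum of the
second derivatives along the real and imaginary coordinate directions. -/
noncomputable def lapC (f : ℂ → ℝ) (z : ℂ) : ℝ :=
  deriv (deriv (fun t : ℝ => f (z + t))) 0 +
  deriv (deriv (fun t : ℝ => f (z + t * Complex.I))) 0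

theorem iteratedDeriv_two_eq_deriv_deriv (f : ℝ → ℝ) : iteratedDeriv 2 f = deriv (deriv f) := by
  rw [iteratedDeriv_succ, iteratedDeriv_one]

theorem deriv_deriv_nonpos_of_isLocalMax {f : ℝ → ℝ} {x : ℝ} (hf : ContinuousAt f x)
    (h : IsLocalMax f x) : deriv (deriv f) x ≤ 0 := by
  by_contra! hpos
  -- By the second derivative test `x` would also be a local minimum, so `f` is locally constant.
  have hmin : IsLocalMin f x := isLocalMin_of_deriv_deriv_pos hpos h.deriv_eq_zero hf
  have hconst : f =ᶠ[𝓝 x] fun _ => f x :=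
    (hmin.and h).mono fun y hy => le_antisymm hy.2 hy.1
  simp [hconst.deriv.deriv_eq] at hpos

theorem deriv_deriv_le_of_isLocalMax_sub {f g : ℝ → ℝ} {x : ℝ} (hf : ContDiffAt ℝ 2 f x)
    (hg : ContDiffAt ℝ 2 g x) (h : IsLocalMax (f - g) x) :
    deriv (deriv f) x ≤ deriv (deriv g) x := by
  have := deriv_deriv_nonpos_of_isLocalMax (hf.continuousAt.sub hg.continuousAt) h
  rw [← iteratedDeriv_two_eq_deriv_deriv, iteratedDeriv_sub hf hg] at this
  simpa [iteratedDeriv_two_eq_deriv_deriv] using this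

theorem lapC_le_of_isLocalMax_sub {u v : ℂ → ℝ} {w : ℂ} (hu : ContDiffAt ℝ 2 u w)
    (hv : ContDiffAt ℝ 2 v w) (h : IsLocalMax (u - v) w) : lapC u w ≤ lapC v w := by
  have line : ∀ d : ℂ, deriv (deriv fun t : ℝ => u (w + t * d)) 0 ≤
      deriv (deriv fun t : ℝ => v (w + t * d)) 0 := by
    intro d
    have hL : ContDiff ℝ 2 fun t : ℝ => w + t * d :=
      contDiff_const.add (Complex.ofRealCLM.contDiff.mul contDiff_const)
    have hL0 : w + ((0 : ℝ) : ℂ) * d = w := by simp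
    apply deriv_deriv_le_of_isLocalMax_sub
    · exact (hL0 ▸ hu).comp 0 hL.contDiffAt
    · exact (hL0 ▸ hv).comp 0 hL.contDiffAt
    · exact IsLocalMax.comp_continuous (g := fun t : ℝ => w + t * d) (hL0 ▸ h)
        hL.continuous.continuousAt
  have h1 := line 1
  simp only [mul_one] at h1
  exact add_le_add h1 (line Complex.I)

theorem deriv_deriv_comp_add_sq_add {φ : ℝ → ℝ} {a b : ℝ} (hφ : ContDiffAt ℝ 2 φ (a ^ 2 + b)) :
    deriv (deriv fun t => φ ((a + t) ^ 2 + b)) 0 =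
      4 * a ^ 2 * iteratedDeriv 2 φ (a ^ 2 + b) + 2 * deriv φ (a ^ 2 + b) := by
  have hq' : deriv (fun t : ℝ => (a + t) ^ 2 + b) = fun t => 2 * (a + t) := by
    funext t
    have := (((hasDerivAt_id' t).const_add a).fun_pow 2).add_const b
    exact (by simpa using this : HasDerivAt _ (2 * (a + t)) t).deriv
  have hq'' : iteratedDeriv 2 (fun t : ℝ => (a + t) ^ 2 + b) 0 = 2 := by
    simp [iteratedDeriv_two_eq_deriv_deriv, hq']
  have hq : ContDiffAt ℝ 2 (fun t : ℝ => (a + t) ^ 2 + b) 0 := by fun_prop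
  rw [← iteratedDeriv_two_eq_deriv_deriv]
  have := iteratedDeriv_comp_two (g := φ) (x := 0) (by simpa using hφ) hq
  simp only [Function.comp_def] at this
  rw [this, hq'', hq']
  simp only [add_zero]
  ring

theorem lapC_comp_norm_sq {φ : ℝ → ℝ} {w : ℂ} (hφ : ContDiffAt ℝ 2 φ (‖w‖ ^ 2)) :
    lapC (fun z => φ (‖z‖ ^ 2)) w =
      4 * ‖w‖ ^ 2 * iteratedDeriv 2 φ (‖w‖ ^ 2) + 4 * deriv φ (‖w‖ ^ 2) := by
  have hw : ‖w‖ ^ 2 = w.re ^ 2 + w.im ^ 2 := by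
    rw [Complex.sq_norm, Complex.normSq_apply]; ring
  have hre : (fun t : ℝ => φ (‖w + t‖ ^ 2)) = fun t => φ ((w.re + t) ^ 2 + w.im ^ 2) := by
    funext t; simp [Complex.sq_norm, Complex.normSq_apply]; ring_nf
  have him : (fun t : ℝ => φ (‖w + t * Complex.I‖ ^ 2)) =
      fun t => φ ((w.im + t) ^ 2 + w.re ^ 2) := by
    funext t; simp [Complex.sq_norm, Complex.normSq_apply]; ring_nf
  rw [hw] at hφ ⊢
  rw [lapC, hre, him, deriv_deriv_comp_add_sq_add hφ,
    deriv_deriv_comp_add_sq_add (by rwa [add_comm])]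
  rw [add_comm (w.im ^ 2)]
  ring

noncomputable def barrier (S ε : ℝ) (z : ℂ) : ℝ :=
  ε + 2 * (Real.log S - Real.log (S - ‖z‖ ^ 2))

section Barrier

variable {S ε : ℝ}

theorem barrier_zero : barrier S ε 0 = ε := by simp [barrier]

theorem contDiffAt_barrier {w : ℂ} (hw : ‖w‖ ^ 2 < S) : ContDiffAt ℝ 2 (barrier S ε) w :=
  contDiffAt_const.add <| contDiffAt_const.mul <| contDiffAt_const.sub <|
    (contDiffAt_const.sub (contDiff_norm_sq ℝ).contDiffAt).log (sub_pos.2 hw).ne'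

theorem lapC_barrier {w : ℂ} (hw : ‖w‖ ^ 2 < S) :
    lapC (barrier S ε) w = 8 * S / (S - ‖w‖ ^ 2) ^ 2 := by
  have hD : S - ‖w‖ ^ 2 ≠ 0 := (sub_pos.2 hw).ne'
  have hφ : ContDiffAt ℝ 2 (fun s => ε + 2 * (Real.log S - Real.log (S - s))) (‖w‖ ^ 2) :=
    contDiffAt_const.add <| contDiffAt_const.mul <| contDiffAt_const.sub <|
      (contDiffAt_const.sub contDiffAt_id).log hD
  have h1 : deriv (fun s => ε + 2 * (Real.log S - Real.log (S - s))) (‖w‖ ^ 2) =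
      2 / (S - ‖w‖ ^ 2) := by
    simp [deriv_comp_const_sub, div_eq_mul_inv]
  have h2 : iteratedDeriv 2 (fun s => ε + 2 * (Real.log S - Real.log (S - s))) (‖w‖ ^ 2) =
      2 / (S - ‖w‖ ^ 2) ^ 2 := by
    rw [iteratedDeriv_const_add two_pos, iteratedDeriv_const_mul_field,
      iteratedDeriv_const_sub two_pos]
    simp [iteratedDeriv_comp_const_sub, iteratedDeriv_two_eq_deriv_deriv, div_eq_mul_inv]
  have hb : barrier S ε = fun z => (fun s => ε + 2 * (Real.log S - Real.log (S - s))) (‖z‖ ^ 2) :=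
    rfl
  rw [hb, lapC_comp_norm_sq hφ, h1, h2]
  field_simp
  ring

theorem exp_barrier (hS : 0 < S) {z : ℂ} (hz : ‖z‖ ^ 2 < S) :
    Real.exp (barrier S ε z) = Real.exp ε * (S / (S - ‖z‖ ^ 2)) ^ 2 := by
  rw [barrier, ← Real.log_div hS.ne' (sub_pos.2 hz).ne', Real.exp_add, mul_comm 2, Real.exp_mul,
    Real.exp_log (div_pos hS (sub_pos.2 hz))]
  norm_cast

theorem lapC_barrier_le (hS : S * (Real.exp ε - 1) = 4) {w : ℂ} (hw : ‖w‖ ^ 2 < S) :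
    lapC (barrier S ε) w ≤ 2 * (Real.exp (barrier S ε w) - 1) := by
  have hS0 : 0 < S := lt_of_le_of_lt (by positivity) hw
  have hD : 0 < S - ‖w‖ ^ 2 := sub_pos.2 hw
  have hD2 : (S - ‖w‖ ^ 2) ^ 2 ≤ S ^ 2 := pow_le_pow_left₀ hD.le (by linarith [sq_nonneg ‖w‖]) 2
  have hSe : Real.exp ε * S ^ 2 = S ^ 2 + 4 * S := by linear_combination S * hS
  rw [lapC_barrier hw, exp_barrier hS0 hw, div_pow, mul_div_assoc', div_le_iff₀ (by positivity)]
  have hrhs : 2 * (Real.exp ε * S ^ 2 / (S - ‖w‖ ^ 2) ^ 2 - 1) * (S - ‖w‖ ^ 2) ^ 2 =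
      2 * (Real.exp ε * S ^ 2 - (S - ‖w‖ ^ 2) ^ 2) := by
    field_simp
  linarith

theorem exists_radius_le_barrier (hS : 0 < S) (M : ℝ) :
    ∃ ρ, 0 ≤ ρ ∧ ρ ^ 2 < S ∧ ∀ z : ℂ, ‖z‖ = ρ → M ≤ barrier S ε z := by
  set τ := min (S / 2) (S * Real.exp ((ε - M) / 2))
  have hτ : 0 < τ := lt_min (by positivity) (by positivity)
  have hτS : τ < S := (min_le_left _ _).trans_lt (by linarith)
  refine ⟨√(S - τ), Real.sqrt_nonneg _, by rw [Real.sq_sqrt (by linarith)]; linarith, ?_⟩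
  intro z hz
  have hlog : Real.log τ ≤ Real.log S + (ε - M) / 2 := by
    rw [← Real.log_exp ((ε - M) / 2), ← Real.log_mul hS.ne' (Real.exp_pos _).ne']
    exact Real.log_le_log hτ (min_le_right _ _)
  rw [barrier, hz, Real.sq_sqrt (by linarith), sub_sub_cancel]
  linarith

end Barrier

/-- Subsolutions of the vortex equation with `k = 1`, `Δu = 2(e^u - 1)`. -/
def IsVortexSubsolution (u : ℂ → ℝ) : Prop :=
  ∀ z, 2 * (Real.exp (u z) - 1) ≤ lapC u z

namespace IsVortexSubsolution

variable {u : ℂ → ℝ}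

theorem comp_const_add (h : IsVortexSubsolution u) (a : ℂ) :
    IsVortexSubsolution fun z => u (a + z) :=
  fun z => by simpa only [lapC, add_assoc] using h (a + z)

theorem apply_zero_le (h : IsVortexSubsolution u) (hu : ContDiff ℝ 2 u) {ε : ℝ} (hε : 0 < ε) :
    u 0 ≤ ε := by
  have hexp : 0 < Real.exp ε - 1 := by linarith [Real.add_one_lt_exp hε.ne']
  set S := 4 / (Real.exp ε - 1)
  have hS : S * (Real.exp ε - 1) = 4 := div_mul_cancel₀ _ hexp.ne'
  obtain ⟨M, hM⟩ := (isCompact_closedBall (0 : ℂ) √S).bddAbove_image hu.continuous.continuousOn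
  obtain ⟨ρ, hρ0, hρS, hρM⟩ := exists_radius_le_barrier (S := S) (ε := ε) (by positivity) M
  by_contra! h0
  have hballS : ∀ z ∈ closedBall (0 : ℂ) ρ, ‖z‖ ^ 2 < S := fun z hz =>
    (pow_le_pow_left₀ (norm_nonneg z) (mem_closedBall_zero_iff.1 hz) 2).trans_lt hρS
  have hsphere : ∀ z ∈ closedBall (0 : ℂ) ρ \ ball 0 ρ,
      (u - barrier S ε) z < (u - barrier S ε) 0 := by
    rintro z ⟨hz, hz'⟩
    have hzρ : ‖z‖ = ρ := le_antisymm (mem_closedBall_zero_iff.1 hz) (by simpa using hz')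
    have hzS : z ∈ closedBall (0 : ℂ) √S :=
      mem_closedBall_zero_iff.2 (hzρ ▸ Real.le_sqrt_of_sq_le hρS.le)
    simp only [Pi.sub_apply, barrier_zero]
    linarith [hM ⟨z, hzS, rfl⟩, hρM z hzρ]
  obtain ⟨w, hw, hmax⟩ := (isCompact_closedBall (0 : ℂ) ρ).exists_isMaxOn_mem_subset
    (fun z hz => (hu.contDiffAt.sub (contDiffAt_barrier (hballS z hz))).continuousAt
      |>.continuousWithinAt)
    (mem_closedBall_self hρ0) hsphere
  have hwS := hballS w (ball_subset_closedBall hw)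
  have hlap := lapC_le_of_isLocalMax_sub hu.contDiffAt (contDiffAt_barrier hwS)
    (hmax.isLocalMax (closedBall_mem_nhds_of_mem hw))
  have huw : u w ≤ barrier S ε w :=
    Real.exp_le_exp.1 (by linarith [h w, lapC_barrier_le hS hwS])
  have h0w : u 0 - barrier S ε 0 ≤ u w - barrier S ε w := hmax (mem_closedBall_self hρ0)
  rw [barrier_zero] at h0w
  linarith

theorem nonpos (h : IsVortexSubsolution u) (hu : ContDiff ℝ 2 u) (z : ℂ) : u z ≤ 0 := by
  refine le_of_forall_pos_le_add fun ε hε => ?_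
  simpa using (h.comp_const_add z).apply_zero_le (hu.comp (contDiff_const.add contDiff_id)) hε

end IsVortexSubsolution

/-- if `k ≥ 1` and `u` is a `C²` function on `ℂ` with
`Δu = 2(e^u − e^{(1−k)u})` and `u ≥ 0` everywhere, then `u ≡ 0`. -/
theorem stmt18 (k : ℕ) (hk : 1 ≤ k) (u : ℂ → ℝ) (hu : ContDiff ℝ 2 u)
    (heq : ∀ z : ℂ,
      lapC u z = 2 * (Real.exp (u z) - Real.exp ((1 - (k : ℝ)) * u z)))
    (hnn : ∀ z : ℂ, 0 ≤ u z) :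
    ∀ z : ℂ, u z = 0 := by
  have hsub : IsVortexSubsolution u := fun z => by
    have hk' : (1 : ℝ) ≤ k := by exact_mod_cast hk
    have : Real.exp ((1 - (k : ℝ)) * u z) ≤ 1 :=
      Real.exp_le_one_iff.2 (mul_nonpos_of_nonpos_of_nonneg (by linarith) (hnn z))
    linarith [heq z]
  exact fun z => le_antisymm (hsub.nonpos hu z) (hnn z)
end
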